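/- arXiv:1412.2292 — 9 statements merged into one kernel-verified Lean document; each statement's English description precedes it below -/
import Mathlib

section
/- Let A be an n×n real symmetric matrix and let α be a set of indices of cardinality at least two. Then α is a P-set of A if and only if every two-element subset of α is a P-set of A. -/
open Matrix

/-- The nullity of a square real matrix. -/
noncomputable def Matrix.nullity {ι : Type*} [Fintype ι] (A : Matrix ι ι ℝ) : ℕ :=
  Fintype.card ι - A.rank

/-- `A.subOn s` is the principal submatrix of `A` on the rows and columns indexed
by `s`; thus `A.subOn sᶜ` is the matrix `A(s)` obtained by deleting the rows and
columns indexed by `s`. -/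
def Matrix.subOn {ι : Type*} (A : Matrix ι ι ℝ) (s : Finset ι) : Matrix s s ℝ :=
  A.submatrix Subtype.val Subtype.val

/-- `α` is a P-set of `A` if deleting the rows and columns indexed by `α`
increases the nullity by `|α|`. -/
def Matrix.IsPSet {ι : Type*} [Fintype ι] [DecidableEq ι] (A : Matrix ι ι ℝ)
    (α : Finset ι) : Prop :=
  (A.subOn αᶜ).nullity = A.nullity + α.card


open Matrix Module LinearMap


variable {n : ℕ}

/-- The subspace of vectors vanishing on α whose image under A is supported on α. -/
def Vsub (A : Matrix (Fin n) (Fin n) ℝ) (α : Finset (Fin n)) : Submodule ℝ (Fin n → ℝ) where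
  carrier := {y | (∀ i ∈ α, y i = 0) ∧ ∀ j ∉ α, A.mulVec y j = 0}
  add_mem' := by
    rintro x y ⟨hx1, hx2⟩ ⟨hy1, hy2⟩
    refine ⟨fun i hi => by simp [hx1 i hi, hy1 i hi], fun j hj => ?_⟩
    rw [Matrix.mulVec_add]
    simp [hx2 j hj, hy2 j hj]
  zero_mem' := by
    refine ⟨fun i _ => rfl, fun j _ => ?_⟩
    simp
  smul_mem' := by
    rintro c x ⟨hx1, hx2⟩
    refine ⟨fun i hi => by simp [hx1 i hi], fun j hj => ?_⟩
    rw [Matrix.mulVec_smul]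
    simp [hx2 j hj]

lemma sum_eq_subtype (α : Finset (Fin n)) (w : Fin n → ℝ) (hw : ∀ k ∉ α, w k = 0) :
    ∑ k, w k = ∑ k : α, w k.val := by
  rw [← Finset.sum_subtype α (fun _ => Iff.rfl) w]
  exact (Finset.sum_subset (Finset.subset_univ α) (fun x _ hx => hw x hx)).symm

lemma nullity_eq_finrank_ker {ι : Type*} [Fintype ι] (A : Matrix ι ι ℝ) :
    A.nullity = finrank ℝ (LinearMap.ker A.mulVecLin) := by
  have h := LinearMap.finrank_range_add_finrank_ker A.mulVecLin
  rw [Module.finrank_pi] at h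
  rw [Matrix.nullity, Matrix.rank]
  omega

/-- extension by zero as a linear map -/
def extZero (α : Finset (Fin n)) : (α → ℝ) →ₗ[ℝ] (Fin n → ℝ) where
  toFun y := fun k => if h : k ∈ α then y ⟨k, h⟩ else 0
  map_add' x y := by funext k; by_cases h : k ∈ α <;> simp [h]
  map_smul' c x := by funext k; by_cases h : k ∈ α <;> simp [h]

lemma mulVec_extZero (A : Matrix (Fin n) (Fin n) ℝ) (α : Finset (Fin n)) (y : α → ℝ)
    (j : Fin n) : A.mulVec (extZero α y) j = ∑ k : α, A j k.val * y k := by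
  show ∑ k, A j k * (extZero α y) k = _
  rw [sum_eq_subtype α (fun k => A j k * (extZero α y) k)
    (fun k hk => by simp [extZero, hk])]
  exact Finset.sum_congr rfl (fun k _ => by simp [extZero, k.2])

lemma extZero_injective (α : Finset (Fin n)) : Function.Injective (extZero (n := n) α) := by
  intro x y h
  funext k
  have := congrFun h k.val
  simpa [extZero, k.2] using this

lemma subOn_mulVec (A : Matrix (Fin n) (Fin n) ℝ) (s : Finset (Fin n)) (y : s → ℝ)
    (j : s) : (A.subOn s).mulVec y j = ∑ k : s, A j.val k.val * y k := rfl

lemma nullity_subOn (A : Matrix (Fin n) (Fin n) ℝ) (α : Finset (Fin n)) :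
    (A.subOn αᶜ).nullity = finrank ℝ (Vsub A α) := by
  rw [nullity_eq_finrank_ker]
  have hmap : Submodule.map (extZero αᶜ) (LinearMap.ker (A.subOn αᶜ).mulVecLin)
      = Vsub A α := by
    ext x
    constructor
    · rintro ⟨y, hy, rfl⟩
      simp only [SetLike.mem_coe, LinearMap.mem_ker] at hy
      refine ⟨fun i hi => by simp [extZero, hi], fun j hj => ?_⟩
      rw [mulVec_extZero]
      have := congrFun hy ⟨j, by simpa using hj⟩
      simpa [Matrix.mulVecLin, subOn_mulVec] using this
    · rintro ⟨h1, h2⟩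
      refine ⟨fun k => x k.val, ?_, ?_⟩
      · simp only [SetLike.mem_coe, LinearMap.mem_ker]
        funext j
        rw [Matrix.mulVecLin_apply, subOn_mulVec, Pi.zero_apply]
        have hj : j.val ∉ α := Finset.mem_compl.mp j.2
        rw [← h2 j.val hj]
        show _ = ∑ k, A j.val k * x k
        rw [sum_eq_subtype αᶜ (fun k => A j.val k * x k)
          (fun k hk => by show A j.val k * x k = 0; rw [h1 k (by simpa using hk), mul_zero])]
      · funext k
        by_cases hk : k ∈ αᶜ
        · simp only [extZero, LinearMap.coe_mk, AddHom.coe_mk, dif_pos hk]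
        · simp only [extZero, LinearMap.coe_mk, AddHom.coe_mk, dif_neg hk]
          exact (h1 k (by simpa using hk)).symm
  rw [← hmap]
  exact LinearEquiv.finrank_eq
    (Submodule.equivMapOfInjective _ (extZero_injective αᶜ) _)

/-- vectors vanishing on α -/
def Zsub (α : Finset (Fin n)) : Submodule ℝ (Fin n → ℝ) where
  carrier := {y | ∀ i ∈ α, y i = 0}
  add_mem' := fun hx hy i hi => by simp [hx i hi, hy i hi]
  zero_mem' := fun i _ => rfl
  smul_mem' := fun c x hx i hi => by simp [hx i hi]

def Pprop (A : Matrix (Fin n) (Fin n) ℝ) (α : Finset (Fin n)) : Prop :=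
  (∀ x ∈ LinearMap.ker A.mulVecLin, ∀ i ∈ α, x i = 0) ∧
  ∀ i ∈ α, ∃ y : Fin n → ℝ, A.mulVec y = Pi.single i 1 ∧ ∀ j ∈ α, y j = 0

noncomputable def psi (A : Matrix (Fin n) (Fin n) ℝ) (α : Finset (Fin n)) :
    ↥(Vsub A α) →ₗ[ℝ] (α → ℝ) :=
  (LinearMap.funLeft ℝ ℝ (Subtype.val : α → Fin n)).comp
    (A.mulVecLin.comp (Vsub A α).subtype)

lemma psi_apply (A : Matrix (Fin n) (Fin n) ℝ) (α : Finset (Fin n))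
    (y : ↥(Vsub A α)) (i : α) : psi A α y i = A.mulVec y.val i.val := rfl

lemma map_ker_psi (A : Matrix (Fin n) (Fin n) ℝ) (α : Finset (Fin n)) :
    Submodule.map (Vsub A α).subtype (LinearMap.ker (psi A α))
      = (LinearMap.ker A.mulVecLin) ⊓ (Zsub α) := by
  ext x
  constructor
  · rintro ⟨⟨x, hx⟩, hk, rfl⟩
    simp only [SetLike.mem_coe, LinearMap.mem_ker] at hk
    refine ⟨LinearMap.mem_ker.mpr ?_, fun i hi => hx.1 i hi⟩
    rw [Matrix.mulVecLin_apply]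
    funext j
    by_cases hj : j ∈ α
    · have := congrFun hk ⟨j, hj⟩
      simpa [psi_apply] using this
    · exact hx.2 j hj
  · rintro ⟨hk, hz⟩
    simp only [SetLike.mem_coe, LinearMap.mem_ker, Matrix.mulVecLin_apply] at hk
    refine ⟨⟨x, ⟨fun i hi => hz i hi, fun j _ => by rw [hk]; rfl⟩⟩, ?_, rfl⟩
    simp only [SetLike.mem_coe, LinearMap.mem_ker]
    funext i
    rw [psi_apply, hk]
    rfl

lemma finrank_ker_psi (A : Matrix (Fin n) (Fin n) ℝ) (α : Finset (Fin n)) :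
    finrank ℝ (LinearMap.ker (psi A α))
      = finrank ℝ ((LinearMap.ker A.mulVecLin) ⊓ (Zsub α) : Submodule ℝ (Fin n → ℝ)) := by
  rw [← map_ker_psi]
  exact LinearEquiv.finrank_eq
    (Submodule.equivMapOfInjective _ (Submodule.injective_subtype _) _)

lemma isPSet_iff (A : Matrix (Fin n) (Fin n) ℝ) (α : Finset (Fin n)) :
    A.IsPSet α ↔ Pprop A α := by
  rw [Matrix.IsPSet, nullity_subOn, nullity_eq_finrank_ker]
  have hrn := LinearMap.finrank_range_add_finrank_ker (psi A α)
  have hkf := finrank_ker_psi A α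
  constructor
  · intro h
    have hr_le : finrank ℝ (LinearMap.range (psi A α)) ≤ α.card := by
      have := Submodule.finrank_le (LinearMap.range (psi A α))
      rwa [Module.finrank_pi, Fintype.card_coe] at this
    have hk_le : finrank ℝ ((LinearMap.ker A.mulVecLin) ⊓ (Zsub α) :
        Submodule ℝ (Fin n → ℝ)) ≤ finrank ℝ (LinearMap.ker A.mulVecLin) :=
      Submodule.finrank_mono inf_le_left
    have hkeq : finrank ℝ ((LinearMap.ker A.mulVecLin) ⊓ (Zsub α) :
        Submodule ℝ (Fin n → ℝ)) = finrank ℝ (LinearMap.ker A.mulVecLin) := by omega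
    have hKZ : (LinearMap.ker A.mulVecLin) ⊓ (Zsub α) = LinearMap.ker A.mulVecLin :=
      Submodule.eq_of_le_of_finrank_le inf_le_left (le_of_eq hkeq.symm)
    have hreq : finrank ℝ (LinearMap.range (psi A α)) = α.card := by omega
    have hrtop : LinearMap.range (psi A α) = ⊤ := by
      apply Submodule.eq_top_of_finrank_eq
      rw [Module.finrank_pi, Fintype.card_coe, hreq]
    constructor
    · intro x hx i hi
      have : x ∈ (LinearMap.ker A.mulVecLin) ⊓ (Zsub α) := hKZ.symm ▸ hx
      exact this.2 i hi
    · intro i hi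
      obtain ⟨y, hy⟩ := LinearMap.range_eq_top.mp hrtop (Pi.single (⟨i, hi⟩ : α) 1)
      refine ⟨y.val, ?_, fun j hj => y.2.1 j hj⟩
      funext j
      by_cases hj : j ∈ α
      · have := congrFun hy ⟨j, hj⟩
        rw [psi_apply] at this
        rw [this, Pi.single_apply, Pi.single_apply]
        simp [Subtype.ext_iff]
      · rw [y.2.2 j hj, Pi.single_apply, if_neg (fun hji => hj (by rw [hji]; exact hi))]
  · rintro ⟨h1, h2⟩
    have hKZ : (LinearMap.ker A.mulVecLin) ⊓ (Zsub α) = LinearMap.ker A.mulVecLin :=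
      inf_eq_left.mpr (fun x hx i hi => h1 x hx i hi)
    have hsurj : Function.Surjective (psi A α) := by
      have hY : ∀ i : α, ∃ y : ↥(Vsub A α),
          ∀ j : α, psi A α y j = if j = i then 1 else 0 := by
        rintro ⟨i, hi⟩
        obtain ⟨y, hAy, hy0⟩ := h2 i hi
        refine ⟨⟨y, ⟨hy0, fun j hj => by
          rw [hAy, Pi.single_apply, if_neg (fun hji => hj (by rw [hji]; exact hi))]⟩⟩, ?_⟩
        intro j
        rw [psi_apply, hAy, Pi.single_apply]
        simp [Subtype.ext_iff]
      choose Y hY using hY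
      intro v
      refine ⟨∑ i, v i • Y i, ?_⟩
      funext j
      rw [map_sum]
      simp only [_root_.map_smul]
      rw [Finset.sum_apply]
      simp only [Pi.smul_apply, hY, smul_eq_mul, mul_ite, mul_one, mul_zero]
      simp
    have hrtop : finrank ℝ (LinearMap.range (psi A α)) = α.card := by
      rw [LinearMap.range_eq_top.mpr hsurj]
      rw [finrank_top, Module.finrank_pi, Fintype.card_coe]
    rw [hKZ] at hkf
    omega

lemma pair_card {i j : Fin n} (hij : j ≠ i) : ({i, j} : Finset (Fin n)).card = 2 := by
  rw [Finset.card_insert_of_notMem (by simp [hij.symm]), Finset.card_singleton]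

lemma symm_dot (A : Matrix (Fin n) (Fin n) ℝ) (hA : A.IsSymm) (y z : Fin n → ℝ) :
    y ⬝ᵥ A.mulVec z = A.mulVec y ⬝ᵥ z := by
  rw [Matrix.dotProduct_mulVec, ← Matrix.mulVec_transpose, hA.eq]

theorem all_pairs_suffice' {n : ℕ} (A : Matrix (Fin n) (Fin n) ℝ) (hA : A.IsSymm)
    (α : Finset (Fin n)) (hα : 2 ≤ α.card) :
    A.IsPSet α ↔ ∀ γ ⊆ α, γ.card = 2 → A.IsPSet γ := by
  constructor
  · intro h γ hγ _
    rw [isPSet_iff] at h ⊢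
    refine ⟨fun x hx i hi => h.1 x hx i (hγ hi), fun i hi => ?_⟩
    obtain ⟨y, hy1, hy2⟩ := h.2 i (hγ hi)
    exact ⟨y, hy1, fun j hj => hy2 j (hγ hj)⟩
  · intro h
    rw [isPSet_iff]
    have hpair : ∀ i ∈ α, ∀ j ∈ α, j ≠ i → Pprop A {i, j} := by
      intro i hi j hj hji
      rw [← isPSet_iff]
      exact h {i, j} (by simp [Finset.insert_subset_iff, hi, hj]) (pair_card hji)
    constructor
    · intro x hx i hi
      obtain ⟨j, hj, hji⟩ := Finset.exists_mem_ne (s := α) (by omega) i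
      exact (hpair i hi j hj hji).1 x hx i (Finset.mem_insert_self i _)
    · intro i hi
      obtain ⟨j, hj, hji⟩ := Finset.exists_mem_ne (s := α) (by omega) i
      obtain ⟨y, hAy, hy0⟩ := (hpair i hi j hj hji).2 i (Finset.mem_insert_self i _)
      refine ⟨y, hAy, fun k hk => ?_⟩
      by_cases hki : k = i
      · subst hki; exact hy0 k (Finset.mem_insert_self k _)
      · obtain ⟨z, hAz, hz0⟩ := (hpair k hk i hi (Ne.symm hki)).2 k
          (Finset.mem_insert_self k _)
        have h1 : y k = y ⬝ᵥ A.mulVec z := by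
          rw [hAz, dotProduct_single, mul_one]
        have h2 : A.mulVec y ⬝ᵥ z = z i := by
          rw [hAy, single_dotProduct, one_mul]
        rw [h1, symm_dot A hA, h2]
        exact hz0 i (Finset.mem_insert_of_mem (Finset.mem_singleton_self i))

/-- All pairs suffice: a set `α` of at least two indices is a P-set of the
symmetric matrix `A` iff every two-element subset of `α` is a P-set of `A`. -/
theorem all_pairs_suffice {n : ℕ} (A : Matrix (Fin n) (Fin n) ℝ) (hA : A.IsSymm)
    (α : Finset (Fin n)) (hα : 2 ≤ α.card) :
    A.IsPSet α ↔ ∀ γ ⊆ α, γ.card = 2 → A.IsPSet γ :=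
  all_pairs_suffice' A hA α hα
end

section
/- Let A be a symmetric n×n real matrix partitioned as A = [[B, C],[Cᵀ, D]] where B is the k×k leading principal submatrix. Then the index set {1,2,…,k} is a P-set of A if and only if the only vector x ∈ ℝᵏ with xᵀC lying in the row space of D is x = 0. -/
open Matrix

open Module Submodule

private lemma finrank_map_add_inf_ker {K V W : Type*} [Field K] [AddCommGroup V] [Module K V]
    [AddCommGroup W] [Module K W] [FiniteDimensional K V] (f : V →ₗ[K] W) (p : Submodule K V) :
    finrank K (p.map f) + finrank K (LinearMap.ker f ⊓ p : Submodule K V) = finrank K p := by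
  have h := LinearMap.finrank_range_add_finrank_ker (f.domRestrict p)
  rw [LinearMap.range_domRestrict, LinearMap.ker_domRestrict] at h
  rw [← h]
  congr 1
  rw [← Submodule.finrank_map_subtype_eq p (Submodule.comap p.subtype (LinearMap.ker f)),
    Submodule.map_comap_subtype, inf_comm]

/-- For a symmetric block matrix `A = [[B, C], [Cᵀ, D]]` with `B` of size `k`,
the index set of the first block is a P-set of `A` iff the only `x ∈ ℝᵏ` with
`xᵀC` in the row space of `D` is `x = 0`. -/
theorem pset_iff_rowspace {k m : ℕ} (B : Matrix (Fin k) (Fin k) ℝ)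
    (C : Matrix (Fin k) (Fin m) ℝ) (D : Matrix (Fin m) (Fin m) ℝ)
    (hA : (Matrix.fromBlocks B C Cᵀ D).IsSymm) :
    (Matrix.fromBlocks B C Cᵀ D).IsPSet (Finset.univ.image Sum.inl) ↔
      ∀ x : Fin k → ℝ, Matrix.vecMul x C ∈ Submodule.span ℝ (Set.range D) → x = 0 := by
  classical
  set A := Matrix.fromBlocks B C Cᵀ D with hAdef
  have hD : Dᵀ = D := by
    have h := congrArg Matrix.toBlocks₂₂ hA
    simpa [Matrix.fromBlocks_transpose, Matrix.toBlocks_fromBlocks₂₂, hAdef] using h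
  set fC := C.mulVecLin with hfC
  set fD := D.mulVecLin with hfD
  set fCt := Cᵀ.mulVecLin with hfCt
  have hspan : Submodule.span ℝ (Set.range D) = LinearMap.range fD := by
    have h := Matrix.range_mulVecLin Dᵀ
    rw [Matrix.col_transpose, hD] at h
    exact h.symm
  -- Step A: reduce IsPSet to a rank equation
  set α : Finset (Fin k ⊕ Fin m) := Finset.univ.image Sum.inl with hα
  have hcardα : α.card = k := by
    rw [hα, Finset.card_image_of_injective _ Sum.inl_injective, Finset.card_univ,
      Fintype.card_fin]
  have hmem : ∀ i : Fin k ⊕ Fin m, i ∈ αᶜ ↔ ∃ j, i = Sum.inr j := by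
    intro i
    cases i with
    | inl a => simp [hα]
    | inr b => simp [hα]
  let e : Fin m ≃ {x // x ∈ αᶜ} :=
    Equiv.ofBijective (fun j => ⟨Sum.inr j, (hmem _).2 ⟨j, rfl⟩⟩)
      ⟨fun a b hab => by simpa using congrArg Subtype.val hab,
       fun i => by
        obtain ⟨j, hj⟩ := (hmem i.1).1 i.2
        exact ⟨j, Subtype.ext hj.symm⟩⟩
  have hsub : (A.subOn αᶜ).submatrix e e = D := by
    ext i j
    have h1 : (A.subOn αᶜ).submatrix e e i j = A (Sum.inr i) (Sum.inr j) := rfl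
    rw [h1, hAdef]
    simp [Matrix.fromBlocks_apply₂₂]
  have hranksub : (A.subOn αᶜ).rank = D.rank := by
    rw [← hsub, Matrix.rank_submatrix]
  have hcardsub : Fintype.card {x // x ∈ αᶜ} = m := by
    have h := Fintype.card_congr e
    rw [Fintype.card_fin] at h
    exact h.symm
  have hPset : A.IsPSet α ↔ m - D.rank = (k + m - A.rank) + k := by
    rw [Matrix.IsPSet, Matrix.nullity, Matrix.nullity, hranksub, hcardα]
    have : Fintype.card ({x // x ∈ αᶜ}) = m := hcardsub
    rw [show Fintype.card (↥(αᶜ : Finset (Fin k ⊕ Fin m))) = m from hcardsub]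
    simp [Fintype.card_sum]
  -- rank-nullity facts
  have hnA : A.rank + finrank ℝ (LinearMap.ker A.mulVecLin) = k + m := by
    have h := LinearMap.finrank_range_add_finrank_ker A.mulVecLin
    rwa [Module.finrank_fintype_fun_eq_card, Fintype.card_sum, Fintype.card_fin,
      Fintype.card_fin] at h
  have hnD : D.rank + finrank ℝ (LinearMap.ker fD) = m := by
    have h := LinearMap.finrank_range_add_finrank_ker fD
    rwa [Module.finrank_fintype_fun_eq_card, Fintype.card_fin] at h
  have hrD : D.rank ≤ m := by simpa using D.rank_le_card_width
  have hrA : A.rank ≤ k + m := by simpa [Fintype.card_sum] using A.rank_le_card_width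
  -- the map Φ and the submodule X
  set Φ : ((Fin k → ℝ) × (Fin m → ℝ)) →ₗ[ℝ] (Fin m → ℝ) := fCt.coprod fD with hΦ
  set X : Submodule ℝ (Fin k → ℝ) :=
    (LinearMap.ker Φ).map (LinearMap.fst ℝ (Fin k → ℝ) (Fin m → ℝ)) with hX
  have hXmem : ∀ x : Fin k → ℝ, x ∈ X ↔ fCt x ∈ LinearMap.range fD := by
    intro x
    constructor
    · rintro ⟨⟨x', y⟩, hxy, rfl⟩
      simp only [LinearMap.mem_ker, hΦ, LinearMap.coprod_apply] at hxy
      exact ⟨-y, by rw [map_neg]; exact neg_eq_of_add_eq_zero_left hxy⟩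
    · rintro ⟨y, hy⟩
      exact ⟨(x, -y), by simp [hΦ, hy], rfl⟩
  -- ker fst ⊓ ker Φ has dimension dim ker D
  have hkerfst : LinearMap.ker (LinearMap.fst ℝ (Fin k → ℝ) (Fin m → ℝ)) ⊓ LinearMap.ker Φ
      = (LinearMap.ker fD).map (LinearMap.inr ℝ (Fin k → ℝ) (Fin m → ℝ)) := by
    ext ⟨x, y⟩
    simp only [Submodule.mem_inf, LinearMap.mem_ker, LinearMap.fst_apply, hΦ,
      LinearMap.coprod_apply, Submodule.mem_map, LinearMap.inr_apply, Prod.mk.injEq]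
    constructor
    · rintro ⟨rfl, h2⟩
      refine ⟨y, ?_, rfl, rfl⟩
      simpa using h2
    · rintro ⟨z, hz, rfl, rfl⟩
      simp [hz]
  have e1 : finrank ℝ X +
      finrank ℝ (LinearMap.ker fD) = finrank ℝ (LinearMap.ker Φ) := by
    have h := finrank_map_add_inf_ker (LinearMap.fst ℝ (Fin k → ℝ) (Fin m → ℝ))
      (LinearMap.ker Φ)
    rw [hkerfst] at h
    have hfr : finrank ℝ ((LinearMap.ker fD).map (LinearMap.inr ℝ (Fin k → ℝ) (Fin m → ℝ)))
        = finrank ℝ (LinearMap.ker fD) :=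
      ((LinearMap.ker fD).equivMapOfInjective _ LinearMap.inr_injective).finrank_eq.symm
    rw [hfr] at h
    exact h
  have e2 : finrank ℝ ((LinearMap.range fCt ⊔ LinearMap.range fD : Submodule ℝ (Fin m → ℝ))) +
      finrank ℝ (LinearMap.ker Φ) = k + m := by
    have h := LinearMap.finrank_range_add_finrank_ker Φ
    rwa [show LinearMap.range Φ = LinearMap.range fCt ⊔ LinearMap.range fD by
        rw [hΦ, LinearMap.range_coprod],
      Module.finrank_prod, Module.finrank_fintype_fun_eq_card,
      Module.finrank_fintype_fun_eq_card, Fintype.card_fin, Fintype.card_fin] at h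
  -- duality via the stacked matrix S
  set S : Matrix (Fin k ⊕ Fin m) (Fin m) ℝ := Matrix.fromRows C D with hS
  have hkS : LinearMap.ker S.mulVecLin
      = (LinearMap.ker fC ⊓ LinearMap.ker fD : Submodule ℝ (Fin m → ℝ)) := by
    ext y
    simp only [LinearMap.mem_ker, Matrix.mulVecLin_apply, hS, Matrix.fromRows_mulVec,
      Submodule.mem_inf, hfC, hfD]
    constructor
    · intro h
      exact ⟨funext fun i => congrFun h (Sum.inl i), funext fun j => congrFun h (Sum.inr j)⟩
    · rintro ⟨h1, h2⟩
      funext s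
      cases s <;> simp [h1, h2]
  have hrS : LinearMap.range Sᵀ.mulVecLin = LinearMap.range fCt ⊔ LinearMap.range fD := by
    have hST : Sᵀ = Matrix.fromCols Cᵀ D := by
      rw [hS, Matrix.transpose_fromRows, hD]
    apply le_antisymm
    · rintro _ ⟨v, rfl⟩
      rw [Matrix.mulVecLin_apply, hST, ← Sum.elim_comp_inl_inr v,
        Matrix.fromCols_mulVec_sumElim]
      exact Submodule.add_mem_sup ⟨v ∘ Sum.inl, by simp [hfCt, Matrix.mulVec_transpose]⟩
        ⟨v ∘ Sum.inr, by simp [hfD]⟩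
    · rw [sup_le_iff]
      constructor
      · rintro _ ⟨x, rfl⟩
        refine ⟨Sum.elim x (0 : Fin m → ℝ), ?_⟩
        rw [Matrix.mulVecLin_apply, hST, Matrix.fromCols_mulVec_sumElim]
        simp [hfCt, Matrix.mulVec_transpose]
      · rintro _ ⟨y, rfl⟩
        refine ⟨Sum.elim (0 : Fin k → ℝ) y, ?_⟩
        rw [Matrix.mulVecLin_apply, hST, Matrix.fromCols_mulVec_sumElim]
        simp [hfD]
  have e3 : finrank ℝ ((LinearMap.range fCt ⊔ LinearMap.range fD : Submodule ℝ (Fin m → ℝ))) +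
      finrank ℝ ((LinearMap.ker fC ⊓ LinearMap.ker fD : Submodule ℝ (Fin m → ℝ))) = m := by
    have h1 := LinearMap.finrank_range_add_finrank_ker S.mulVecLin
    rw [Module.finrank_fintype_fun_eq_card, Fintype.card_fin] at h1
    have hT : finrank ℝ (LinearMap.range Sᵀ.mulVecLin)
        = finrank ℝ (LinearMap.range S.mulVecLin) := Matrix.rank_transpose S
    rw [← hrS, ← hkS, hT]
    exact h1
  have e4 : finrank ℝ ((LinearMap.ker fD).map fC) +
      finrank ℝ ((LinearMap.ker fC ⊓ LinearMap.ker fD : Submodule ℝ (Fin m → ℝ)))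
      = finrank ℝ (LinearMap.ker fD) :=
    finrank_map_add_inf_ker fC (LinearMap.ker fD)
  -- the embedding g : y ↦ Sum.elim 0 y
  set g : (Fin m → ℝ) →ₗ[ℝ] (Fin k ⊕ Fin m → ℝ) :=
    ((LinearEquiv.sumArrowLequivProdArrow (Fin k) (Fin m) ℝ ℝ).symm.toLinearMap).comp
      (LinearMap.inr ℝ (Fin k → ℝ) (Fin m → ℝ)) with hg
  have hgapp : ∀ y : Fin m → ℝ, g y = Sum.elim (0 : Fin k → ℝ) y := by
    intro y
    funext s
    cases s <;>
      simp [hg, LinearEquiv.sumArrowLequivProdArrow]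
  have hginj : Function.Injective g := by
    intro a b hab
    funext j
    have := congrFun ((hgapp a) ▸ (hgapp b) ▸ hab) (Sum.inr j)
    simpa using this
  have hker : ∀ (x : Fin k → ℝ) (y : Fin m → ℝ),
      Sum.elim x y ∈ LinearMap.ker A.mulVecLin ↔
        (B *ᵥ x + C *ᵥ y = 0 ∧ Cᵀ *ᵥ x + D *ᵥ y = 0) := by
    intro x y
    rw [LinearMap.mem_ker, Matrix.mulVecLin_apply, hAdef, Matrix.fromBlocks_mulVec]
    simp only [Sum.elim_comp_inl, Sum.elim_comp_inr]
    constructor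
    · intro h
      exact ⟨funext fun i => congrFun h (Sum.inl i), funext fun j => congrFun h (Sum.inr j)⟩
    · rintro ⟨h1, h2⟩
      funext s
      cases s <;> simp [h1, h2]
  have hgle : (LinearMap.ker fC ⊓ LinearMap.ker fD).map g ≤ LinearMap.ker A.mulVecLin := by
    rintro _ ⟨y, hy, rfl⟩
    obtain ⟨hy1, hy2⟩ := hy
    simp only [SetLike.mem_coe, LinearMap.mem_ker, hfC, hfD, Matrix.mulVecLin_apply] at hy1 hy2
    rw [hgapp y, hker]
    constructor <;> simp [hy1, hy2]
  have P2 : finrank ℝ ((LinearMap.ker fC ⊓ LinearMap.ker fD : Submodule ℝ (Fin m → ℝ))) ≤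
      finrank ℝ (LinearMap.ker A.mulVecLin) := by
    calc finrank ℝ ((LinearMap.ker fC ⊓ LinearMap.ker fD : Submodule ℝ (Fin m → ℝ)))
        = finrank ℝ ((LinearMap.ker fC ⊓ LinearMap.ker fD).map g) :=
          ((LinearMap.ker fC ⊓ LinearMap.ker fD).equivMapOfInjective _ hginj).finrank_eq
      _ ≤ _ := Submodule.finrank_mono hgle
  -- main equivalence
  have hXbot : X = ⊥ ↔ ∀ x : Fin k → ℝ, Matrix.vecMul x C ∈ Submodule.span ℝ (Set.range D)
      → x = 0 := by
    constructor
    · intro h x hx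
      have hx' : x ∈ X := by
        rw [hXmem]
        rw [hspan] at hx
        rwa [hfCt, Matrix.mulVecLin_apply, Matrix.mulVec_transpose]
      rw [h] at hx'
      simpa using hx'
    · intro h
      rw [Submodule.eq_bot_iff]
      intro x hx
      apply h
      rw [hspan]
      rw [hXmem] at hx
      rwa [hfCt, Matrix.mulVecLin_apply, Matrix.mulVec_transpose] at hx
  rw [← hXbot, hPset]
  constructor
  · intro h
    -- numeric: get finrank X = 0
    have hd : finrank ℝ (LinearMap.ker fD) = finrank ℝ (LinearMap.ker A.mulVecLin) + k := by
      omega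
    have hx0 : finrank ℝ X = 0 := by omega
    exact Submodule.finrank_eq_zero.1 hx0
  · intro h
    -- X = ⊥ gives ker A = map g (ker fC ⊓ ker fD)
    have hle2 : LinearMap.ker A.mulVecLin ≤ (LinearMap.ker fC ⊓ LinearMap.ker fD).map g := by
      intro v hv
      rw [← Sum.elim_comp_inl_inr v] at hv ⊢
      rw [hker] at hv
      obtain ⟨h1, h2⟩ := hv
      have hxX : (v ∘ Sum.inl) ∈ X := by
        rw [hXmem]
        exact ⟨-(v ∘ Sum.inr), by rw [map_neg, hfD, Matrix.mulVecLin_apply, hfCt,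
          Matrix.mulVecLin_apply]; exact neg_eq_of_add_eq_zero_left h2⟩
      rw [h] at hxX
      have hx0 : v ∘ Sum.inl = 0 := by simpa using hxX
      rw [hx0] at h1 h2
      simp only [Matrix.mulVec_zero, zero_add] at h1 h2
      refine ⟨v ∘ Sum.inr, ⟨?_, ?_⟩, ?_⟩
      · simpa [hfC, LinearMap.mem_ker] using h1
      · simpa [hfD, LinearMap.mem_ker] using h2
      · rw [hgapp, hx0]
    have heq : finrank ℝ (LinearMap.ker A.mulVecLin) =
        finrank ℝ ((LinearMap.ker fC ⊓ LinearMap.ker fD : Submodule ℝ (Fin m → ℝ))) := by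
      have := le_antisymm hle2 hgle
      rw [this]
      exact ((LinearMap.ker fC ⊓ LinearMap.ker fD).equivMapOfInjective _ hginj).finrank_eq.symm
    have hx0 : finrank ℝ X = 0 := by rw [h]; exact finrank_bot ℝ _
    omega
end

section
/- Let A be a symmetric n×n real matrix partitioned as A = [[B, C],[Cᵀ, D]] where B is the k×k leading principal submatrix. Then rank(A) = rank(D) + 2k if and only if the only vector x ∈ ℝᵏ with xᵀC lying in the row space of D is x = 0. -/
open Matrix

open Submodule LinearMap Module

noncomputable def ee (a : ℕ) : (Fin a → ℝ) ≃ₗ[ℝ] EuclideanSpace ℝ (Fin a) :=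
  (WithLp.linearEquiv 2 ℝ (Fin a → ℝ)).symm

lemma inner_ee {a : ℕ} (v w : Fin a → ℝ) : inner ℝ (ee a v) (ee a w) = v ⬝ᵥ w := by
  simp [ee, PiLp.inner_apply, dotProduct, WithLp.linearEquiv, mul_comm,
    RCLike.inner_apply]

/-- duality: a vector dot-orthogonal to `ker M` lies in the range of `Mᵀ`. -/
lemma mem_range_transpose_of_ortho_ker {a b : ℕ} (M : Matrix (Fin a) (Fin b) ℝ)
    (w : Fin b → ℝ) (hw : ∀ y, M *ᵥ y = 0 → w ⬝ᵥ y = 0) :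
    w ∈ LinearMap.range Mᵀ.mulVecLin := by
  set e := ee b
  set K : Submodule ℝ (EuclideanSpace ℝ (Fin b)) := (LinearMap.ker M.mulVecLin).map (e : (Fin b → ℝ) →ₗ[ℝ] EuclideanSpace ℝ (Fin b))
  set R : Submodule ℝ (EuclideanSpace ℝ (Fin b)) := (LinearMap.range Mᵀ.mulVecLin).map (e : (Fin b → ℝ) →ₗ[ℝ] EuclideanSpace ℝ (Fin b))
  have hle : R ≤ Kᗮ := by
    rintro r ⟨r', ⟨u, rfl⟩, rfl⟩
    rw [Submodule.mem_orthogonal]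
    rintro x ⟨y, hy, rfl⟩
    rw [LinearEquiv.coe_coe, inner_ee]
    have hy0 : M *ᵥ y = 0 := hy
    have h2 : (Mᵀ *ᵥ u) ⬝ᵥ y = u ⬝ᵥ (M *ᵥ y) := by
      rw [Matrix.dotProduct_mulVec, ← Matrix.mulVec_transpose, dotProduct_comm]
    simp only [Matrix.mulVecLin_apply]
    rw [dotProduct_comm y, h2, hy0, dotProduct_zero]
  have hfr : finrank ℝ R = Mᵀ.rank := (LinearEquiv.finrank_map_eq e _).symm ▸ rfl
  have hfk : finrank ℝ K = finrank ℝ (LinearMap.ker M.mulVecLin) :=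
    (LinearEquiv.finrank_map_eq e _)
  have hrn : M.rank + finrank ℝ (LinearMap.ker M.mulVecLin) = b := by
    have := LinearMap.finrank_range_add_finrank_ker M.mulVecLin
    simpa [Matrix.rank] using this
  have hK : finrank ℝ K + finrank ℝ Kᗮ = b := by
    rw [Submodule.finrank_add_finrank_orthogonal]
    simp [finrank_euclideanSpace]
  have heq : R = Kᗮ := by
    apply Submodule.eq_of_le_of_finrank_le hle
    rw [hfr, Matrix.rank_transpose]
    omega
  have hwK : e w ∈ Kᗮ := by
    rw [Submodule.mem_orthogonal]
    rintro x ⟨y, hy, rfl⟩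
    have hy0 : M *ᵥ y = 0 := hy
    rw [LinearEquiv.coe_coe, inner_ee, dotProduct_comm]
    exact hw y hy0
  rw [← heq] at hwK
  obtain ⟨w', hw', hww⟩ := hwK
  have : w' = w := e.injective hww
  exact this ▸ hw'

lemma exists_ortho_of_ne_top {a : ℕ} (S : Submodule ℝ (Fin a → ℝ)) (hS : S ≠ ⊤) :
    ∃ v : Fin a → ℝ, v ≠ 0 ∧ ∀ s ∈ S, v ⬝ᵥ s = 0 := by
  set e := ee a
  set S' : Submodule ℝ (EuclideanSpace ℝ (Fin a)) := S.map (e : (Fin a → ℝ) →ₗ[ℝ] EuclideanSpace ℝ (Fin a))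
  have hS' : S' ≠ ⊤ := by
    intro h
    apply hS
    apply Submodule.map_injective_of_injective e.injective
    exact h.trans (by rw [Submodule.map_top]; exact (LinearMap.range_eq_top.mpr e.surjective).symm)
  have : S'ᗮ ≠ ⊥ := fun h => hS' (Submodule.orthogonal_eq_bot_iff.mp h)
  obtain ⟨v', hv'mem, hv'⟩ := Submodule.exists_mem_ne_zero_of_ne_bot this
  refine ⟨e.symm v', by simp [LinearEquiv.map_eq_zero_iff, hv'], ?_⟩
  intro s hs
  have h3 := Submodule.inner_left_of_mem_orthogonal (K := S')
    (Submodule.mem_map_of_mem (f := (e : (Fin a → ℝ) →ₗ[ℝ] EuclideanSpace ℝ (Fin a))) hs) hv'mem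
  rw [← inner_ee (e.symm v') s]
  simpa [e] using h3


/-- For a symmetric block matrix `A = [[B, C], [Cᵀ, D]]` with `B` of size `k`,
`rank A = rank D + 2k` iff the only `x ∈ ℝᵏ` with `xᵀC` in the row space of `D`
is `x = 0`. -/
theorem rank_iff_rowspace {k m : ℕ} (B : Matrix (Fin k) (Fin k) ℝ)
    (C : Matrix (Fin k) (Fin m) ℝ) (D : Matrix (Fin m) (Fin m) ℝ)
    (hA : (Matrix.fromBlocks B C Cᵀ D).IsSymm) :
    (Matrix.fromBlocks B C Cᵀ D).rank = D.rank + 2 * k ↔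
      ∀ x : Fin k → ℝ, Matrix.vecMul x C ∈ Submodule.span ℝ (Set.range D) → x = 0 := by
  classical
  set A := Matrix.fromBlocks B C Cᵀ D with hAdef
  have hD : Dᵀ = D := by
    have h := congrArg Matrix.toBlocks₂₂ hA
    simpa [hAdef, Matrix.fromBlocks_transpose, Matrix.toBlocks_fromBlocks₂₂] using h
  have hspan : Submodule.span ℝ (Set.range D) = LinearMap.range D.mulVecLin := by
    rw [Matrix.range_mulVecLin]
    conv_lhs => rw [← hD]
    rfl
  have hstar_iff : (∀ x : Fin k → ℝ, Matrix.vecMul x C ∈ Submodule.span ℝ (Set.range D) → x = 0)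
      ↔ (∀ x : Fin k → ℝ, (Cᵀ *ᵥ x) ∈ LinearMap.range D.mulVecLin → x = 0) := by
    simp_rw [hspan, ← Matrix.mulVec_transpose]
  rw [hstar_iff]
  set N := LinearMap.ker D.mulVecLin with hNdef
  set Nc := N ⊓ LinearMap.ker C.mulVecLin with hNcdef
  set S := N.map C.mulVecLin with hSdef
  set K := LinearMap.ker A.mulVecLin with hKdef
  have hNS : finrank ℝ S + finrank ℝ Nc = finrank ℝ N := by
    have h1 := LinearMap.finrank_range_add_finrank_ker (C.mulVecLin.domRestrict N)
    rw [LinearMap.range_domRestrict, LinearMap.ker_domRestrict] at h1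
    have h2 : finrank ℝ (Submodule.comap N.subtype (LinearMap.ker C.mulVecLin)) = finrank ℝ Nc := by
      rw [hNcdef, ← Submodule.map_comap_subtype]
      exact (Submodule.equivMapOfInjective N.subtype N.injective_subtype _).finrank_eq
    rw [h2] at h1
    exact h1
  have hrnD : D.rank + finrank ℝ N = m := by
    have := LinearMap.finrank_range_add_finrank_ker D.mulVecLin
    simpa [Matrix.rank] using this
  have hrnA : A.rank + finrank ℝ K = k + m := by
    have := LinearMap.finrank_range_add_finrank_ker A.mulVecLin
    simpa [Matrix.rank] using this
  let j : (Fin m → ℝ) →ₗ[ℝ] (Fin k ⊕ Fin m → ℝ) :=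
    { toFun := fun y => Sum.elim 0 y
      map_add' := by intros y z; funext i; cases i <;> simp
      map_smul' := by intros c y; funext i; cases i <;> simp }
  have hj : Function.Injective j := by
    intro y z h
    funext i
    exact congrFun h (Sum.inr i)
  have hjNcK : Submodule.map j Nc ≤ K := by
    rintro u ⟨y, hy, rfl⟩
    have hyD : D *ᵥ y = 0 := hy.1
    have hyC : C *ᵥ y = 0 := hy.2
    show A.mulVecLin (Sum.elim 0 y) = 0
    rw [Matrix.mulVecLin_apply, hAdef, Matrix.fromBlocks_mulVec]
    funext i
    cases i <;> simp [hyD, hyC]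
  have hNcK : finrank ℝ Nc ≤ finrank ℝ K :=
    le_trans (le_of_eq (Submodule.equivMapOfInjective j hj Nc).finrank_eq)
      (Submodule.finrank_mono hjNcK)
  have key : ∀ (x : Fin k → ℝ) (z : Fin m → ℝ), D *ᵥ z = Cᵀ *ᵥ x → ∀ s ∈ S, x ⬝ᵥ s = 0 := by
    rintro x z hz s ⟨y, hy, rfl⟩
    have hy0 : D *ᵥ y = 0 := hy
    rw [Matrix.mulVecLin_apply]
    calc x ⬝ᵥ (C *ᵥ y) = (x ᵥ* C) ⬝ᵥ y := Matrix.dotProduct_mulVec x C y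
    _ = (Cᵀ *ᵥ x) ⬝ᵥ y := by rw [Matrix.mulVec_transpose]
    _ = (D *ᵥ z) ⬝ᵥ y := by rw [hz]
    _ = y ⬝ᵥ (D *ᵥ z) := dotProduct_comm _ _
    _ = (y ᵥ* D) ⬝ᵥ z := Matrix.dotProduct_mulVec y D z
    _ = (Dᵀ *ᵥ y) ⬝ᵥ z := by rw [Matrix.mulVec_transpose]
    _ = 0 := by rw [hD, hy0, zero_dotProduct]
  constructor
  · intro hrank x hx
    obtain ⟨z, hz⟩ := hx
    by_contra hx0
    have hSne : S ≠ ⊤ := by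
      intro hS
      have hxS : x ∈ S := hS ▸ Submodule.mem_top
      have h0 : x ⬝ᵥ x = 0 := key x z hz x hxS
      exact hx0 (dotProduct_self_eq_zero.mp h0)
    have hSlt : finrank ℝ S < k := by
      have := Submodule.finrank_lt hSne
      simpa using this
    omega
  · intro hstar
    have hStop : S = ⊤ := by
      by_contra hS
      obtain ⟨v, hv0, hv⟩ := exists_ortho_of_ne_top S hS
      have hw : ∀ y, D *ᵥ y = 0 → (Cᵀ *ᵥ v) ⬝ᵥ y = 0 := by
        intro y hy
        calc (Cᵀ *ᵥ v) ⬝ᵥ y = (v ᵥ* C) ⬝ᵥ y := by rw [Matrix.mulVec_transpose]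
        _ = v ⬝ᵥ (C *ᵥ y) := (Matrix.dotProduct_mulVec v C y).symm
        _ = 0 := hv _ ⟨y, hy, rfl⟩
      have hmem := mem_range_transpose_of_ortho_ker D (Cᵀ *ᵥ v) hw
      rw [hD] at hmem
      exact hv0 (hstar v hmem)
    have hK : K = Submodule.map j Nc := by
      apply le_antisymm _ hjNcK
      intro u hu
      have hu0 : A *ᵥ u = 0 := hu
      have hu' : A *ᵥ (Sum.elim (u ∘ Sum.inl) (u ∘ Sum.inr)) = 0 := by
        convert hu0 using 2
        funext i; cases i <;> rfl
      rw [hAdef, Matrix.fromBlocks_mulVec] at hu'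
      have h1 : B *ᵥ (u ∘ Sum.inl) + C *ᵥ (u ∘ Sum.inr) = 0 :=
        funext fun i => congrFun hu' (Sum.inl i)
      have h2 : Cᵀ *ᵥ (u ∘ Sum.inl) + D *ᵥ (u ∘ Sum.inr) = 0 :=
        funext fun i => congrFun hu' (Sum.inr i)
      have hx0 : u ∘ Sum.inl = 0 := by
        apply hstar
        refine ⟨-(u ∘ Sum.inr), ?_⟩
        rw [Matrix.mulVecLin_apply, Matrix.mulVec_neg, neg_eq_iff_add_eq_zero, add_comm]
        exact h2
      rw [hx0] at h1 h2
      simp only [Matrix.mulVec_zero, zero_add] at h1 h2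
      refine ⟨u ∘ Sum.inr, Submodule.mem_inf.mpr ⟨h2, h1⟩, ?_⟩
      funext i
      cases i with
      | inl i => exact (congrFun hx0 i).symm
      | inr i => rfl
    have hKeq : finrank ℝ K = finrank ℝ Nc := by
      rw [hK]
      exact (Submodule.equivMapOfInjective j hj Nc).finrank_eq.symm
    have hStopk : finrank ℝ S = k := by
      rw [hStop]
      simpa using (finrank_top ℝ (Fin k → ℝ))
    omega
end

section
/- Let A be an n×n real symmetric matrix. An index i is a downer vertex of A if and only if row i of A is a linear combination of the other rows of A. -/
open Matrix

/-- For a symmetric matrix `A`, an index `i` is a downer vertex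
(`ν(A({i})) = ν(A) - 1`) iff row `i` of `A` is a linear combination of the
other rows of `A`. -/
theorem downer_iff_row_in_span {n : ℕ} (A : Matrix (Fin n) (Fin n) ℝ)
    (hA : A.IsSymm) (i : Fin n) :
    (A.subOn {i}ᶜ).nullity + 1 = A.nullity ↔
      A i ∈ Submodule.span ℝ (A '' {j | j ≠ i}) := by
  classical
  set T : Finset (Fin n) := ({i}ᶜ : Finset (Fin n)) with hT
  set S : Set (Fin n) := {j | j ≠ i} with hS
  -- B : rows of A other than row i
  set B : Matrix T (Fin n) ℝ := A.submatrix Subtype.val id with hB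
  set C : Matrix T T ℝ := A.subOn T with hC
  have hmemT : ∀ j : Fin n, j ∈ T ↔ j ≠ i := by
    intro j; simp [hT]
  have hcardT : Fintype.card T = n - 1 := by
    simp [hT, Finset.card_compl]
  -- rows of B are exactly `A '' S`
  have hrangeB : Set.range B = A '' S := by
    ext x
    constructor
    · rintro ⟨⟨t, ht⟩, rfl⟩
      exact ⟨t, (hmemT t).mp ht, rfl⟩
    · rintro ⟨j, hj, rfl⟩
      exact ⟨⟨j, (hmemT j).mpr hj⟩, rfl⟩
  -- range of A as rows
  have hrangeA : Set.range A = insert (A i) (A '' S) := by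
    ext x
    constructor
    · rintro ⟨j, rfl⟩
      by_cases h : j = i
      · subst h; exact Set.mem_insert _ _
      · exact Set.mem_insert_of_mem _ ⟨j, h, rfl⟩
    · rintro (rfl | ⟨j, hj, rfl⟩)
      · exact ⟨i, rfl⟩
      · exact ⟨j, rfl⟩
  have hrA : A.rank = Module.finrank ℝ (Submodule.span ℝ (Set.range A)) :=
    A.rank_eq_finrank_span_row
  have hrB : B.rank = Module.finrank ℝ (Submodule.span ℝ (A '' S)) := by
    rw [B.rank_eq_finrank_span_row, show Set.range B.row = A '' S from hrangeB]
  -- columns of C are columns of B restricted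
  have hCcol : ∀ j : T, Cᵀ j = Bᵀ (j : Fin n) := by
    intro j; rfl
  have hrangeCt : Set.range Cᵀ = Bᵀ '' S := by
    ext x
    constructor
    · rintro ⟨⟨t, ht⟩, rfl⟩
      exact ⟨t, (hmemT t).mp ht, hCcol ⟨t, ht⟩ ▸ rfl⟩
    · rintro ⟨j, hj, rfl⟩
      exact ⟨⟨j, (hmemT j).mpr hj⟩, hCcol _⟩
  have hrangeBt : Set.range Bᵀ = insert (Bᵀ i) (Bᵀ '' S) := by
    ext x
    constructor
    · rintro ⟨j, rfl⟩
      by_cases h : j = i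
      · subst h; exact Set.mem_insert _ _
      · exact Set.mem_insert_of_mem _ ⟨j, h, rfl⟩
    · rintro (rfl | ⟨j, hj, rfl⟩)
      · exact ⟨i, rfl⟩
      · exact ⟨j, rfl⟩
  have hrCcols : C.rank = Module.finrank ℝ (Submodule.span ℝ (Bᵀ '' S)) := by
    rw [C.rank_eq_finrank_span_cols, show Set.range C.col = Bᵀ '' S from hrangeCt]
  have hrBcols : B.rank
      = Module.finrank ℝ (Submodule.span ℝ (insert (Bᵀ i) (Bᵀ '' S))) := by
    rw [B.rank_eq_finrank_span_cols,
      show Set.range B.col = insert (Bᵀ i) (Bᵀ '' S) from hrangeBt]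
  -- basic rank inequalities
  have hCB : C.rank ≤ B.rank := by
    rw [hrCcols, hrBcols]
    exact Submodule.finrank_mono
      (Submodule.span_mono (Set.subset_insert _ _))
  have hBA : B.rank ≤ A.rank := by
    rw [hrB, hrA]
    refine Submodule.finrank_mono (Submodule.span_mono ?_)
    rw [hrangeA]; exact Set.subset_insert _ _
  -- membership iff rank B = rank A
  have hmem_iff : A i ∈ Submodule.span ℝ (A '' S) ↔ B.rank = A.rank := by
    constructor
    · intro h
      rw [hrA, hrB, hrangeA, Submodule.span_insert_eq_span h]
    · intro h
      rw [hrB, hrA] at h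
      have hle : Submodule.span ℝ (A '' S) ≤ Submodule.span ℝ (Set.range A) :=
        Submodule.span_mono (by rw [hrangeA]; exact Set.subset_insert _ _)
      have := Submodule.eq_of_le_of_finrank_eq hle h
      rw [this]
      exact Submodule.subset_span ⟨i, rfl⟩
  -- membership implies rank C = rank B
  have hmem_CB : A i ∈ Submodule.span ℝ (A '' S) → C.rank = B.rank := by
    intro h
    let F : (Fin n → ℝ) →ₗ[ℝ] (T → ℝ) :=
      LinearMap.funLeft ℝ ℝ (Subtype.val : T → Fin n)
    have hFrow : ∀ j : Fin n, F (A j) = Bᵀ j := by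
      intro j
      funext t
      show A j (t : Fin n) = A (t : Fin n) j
      exact (hA.apply j (t : Fin n)).symm
    have hcoli : Bᵀ i ∈ Submodule.span ℝ (Bᵀ '' S) := by
      have h1 : F (A i) ∈ Submodule.span ℝ (F '' (A '' S)) :=
        Submodule.apply_mem_span_image_of_mem_span F h
      have h2 : F '' (A '' S) = Bᵀ '' S := by
        refine (Set.image_image (g := F) (f := A) S).trans ?_
        exact Set.image_congr fun j _ => hFrow j
      rw [hFrow i, h2] at h1
      exact h1
    rw [hrCcols, hrBcols, Submodule.span_insert_eq_span hcoli]
  -- bounds for the arithmetic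
  have hApos : (0 : ℕ) < n := i.pos
  have hrankA_le : A.rank ≤ n := by
    simpa using A.rank_le_card_height
  have hrankC_le : C.rank ≤ n - 1 := by
    simpa [hcardT] using C.rank_le_card_height
  -- unfold nullities
  have hnulC : (A.subOn {i}ᶜ).nullity = (n - 1) - C.rank := by
    show Fintype.card T - C.rank = (n - 1) - C.rank
    rw [hcardT]
  have hnulA : A.nullity = n - A.rank := by
    simp [Matrix.nullity]
  rw [hnulC, hnulA]
  constructor
  · intro h
    have hCA : C.rank = A.rank := by omega
    have hBAeq : B.rank = A.rank := le_antisymm hBA (hCA ▸ hCB)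
    exact hmem_iff.mpr hBAeq
  · intro h
    have hBAeq : B.rank = A.rank := hmem_iff.mp h
    have hCA : C.rank = A.rank := by rw [hmem_CB h, hBAeq]
    omega
end

section
/- Let A be an n×n real symmetric matrix, let α be a nonempty P-set of A, and let γ be a nonempty subset of α. Then γ is a P-set of A. -/
open Matrix

lemma aux_rank_le_cols {m ι l : Type*} [Fintype m] [Fintype ι] [Fintype l]
    (A : Matrix m ι ℝ) (e : l → ι) (he : Function.Injective e) :
    A.rank ≤ (A.submatrix id e).rank + (Fintype.card ι - Fintype.card l) := by
  classical
  rw [Matrix.rank_eq_finrank_span_cols, Matrix.rank_eq_finrank_span_cols]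
  have h1 : (A.submatrix id e).col = A.col ∘ e := rfl
  have hcover : Set.range A.col = A.col '' Set.range e ∪ A.col '' (Set.range e)ᶜ := by
    rw [← Set.image_union, Set.union_compl_self, Set.image_univ]
  rw [hcover, Submodule.span_union]
  refine (Submodule.finrank_add_le_finrank_add_finrank _ _).trans ?_
  have h2 : A.col '' Set.range e = Set.range (A.submatrix id e).col := by
    rw [h1, Set.range_comp]
  have h3 : Module.finrank ℝ (Submodule.span ℝ (A.col '' (Set.range e)ᶜ))
      ≤ Fintype.card ι - Fintype.card l := by
    rw [Set.image_eq_range]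
    refine (finrank_range_le_card _).trans ?_
    rw [Fintype.card_compl_set, Set.card_range_of_injective he]
  rw [h2]
  omega

lemma aux_rank_le_rows {m ι l : Type*} [Fintype m] [Fintype ι] [Fintype l]
    (A : Matrix m ι ℝ) (e : l → m) (he : Function.Injective e) :
    A.rank ≤ (A.submatrix e id).rank + (Fintype.card m - Fintype.card l) := by
  rw [← Matrix.rank_transpose A, ← Matrix.rank_transpose (A.submatrix e id)]
  exact aux_rank_le_cols Aᵀ e he

lemma aux_rank_le_square {ι l : Type*} [Fintype ι] [Fintype l]
    (A : Matrix ι ι ℝ) (e : l → ι) (he : Function.Injective e) :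
    A.rank ≤ (A.submatrix e e).rank + 2 * (Fintype.card ι - Fintype.card l) := by
  have h1 := aux_rank_le_cols A e he
  have h2 := aux_rank_le_rows (A.submatrix id e) e he
  rw [Matrix.submatrix_submatrix] at h2
  simp only [Function.comp_id, Function.id_comp] at h2
  omega

lemma aux_rank_le_subOn {ι : Type*} [Fintype ι] [DecidableEq ι]
    (A : Matrix ι ι ℝ) (t : Finset ι) :
    A.rank ≤ (A.subOn t).rank + 2 * (Fintype.card ι - t.card) := by
  have := aux_rank_le_square A (Subtype.val : t → ι) Subtype.val_injective
  rwa [Fintype.card_coe] at this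

lemma aux_rank_le_subOn_subOn {ι : Type*} [Fintype ι] [DecidableEq ι]
    (A : Matrix ι ι ℝ) {s t : Finset ι} (h : t ⊆ s) :
    (A.subOn s).rank ≤ (A.subOn t).rank + 2 * (s.card - t.card) := by
  have hinj : Function.Injective (fun x : t => (⟨x.1, h x.2⟩ : s)) := by
    intro a b hab
    exact Subtype.ext (congrArg (Subtype.val : s → ι) hab)
  have := aux_rank_le_square (A.subOn s) _ hinj
  rw [Fintype.card_coe, Fintype.card_coe] at this
  exact this

/-- Every nonempty subset of a P-set of a symmetric matrix is a P-set. -/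
theorem subset_pset {n : ℕ} (A : Matrix (Fin n) (Fin n) ℝ) (hA : A.IsSymm)
    (α γ : Finset (Fin n)) (hαne : α.Nonempty) (hP : A.IsPSet α)
    (hγα : γ ⊆ α) (hγne : γ.Nonempty) :
    A.IsPSet γ := by
  unfold Matrix.IsPSet Matrix.nullity at *
  have hcard : ∀ s : Finset (Fin n), Fintype.card (sᶜ : Finset (Fin n)) = n - s.card := by
    intro s
    rw [Fintype.card_coe, Finset.card_compl, Fintype.card_fin]
  rw [hcard, Fintype.card_fin] at hP ⊢
  have hrA : A.rank ≤ n := by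
    simpa [Fintype.card_fin] using A.rank_le_card_height
  have hca : α.card ≤ n := by simpa using (Finset.card_le_univ α)
  have hcg : γ.card ≤ α.card := Finset.card_le_card hγα
  have h1 := aux_rank_le_subOn A γᶜ
  rw [Fintype.card_fin, Finset.card_compl, Fintype.card_fin] at h1
  have h2 := aux_rank_le_subOn_subOn A (Finset.compl_subset_compl.mpr hγα)
  rw [Finset.card_compl, Finset.card_compl, Fintype.card_fin] at h2
  have h3 : (A.subOn αᶜ).rank ≤ n - α.card := by
    have := (A.subOn αᶜ).rank_le_card_height
    rwa [hcard] at this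
  omega
end

section
/- Let A be an n×n real symmetric matrix and let α be a set of P-vertices of A with cardinality at least two. Then α is a P-set of A if and only if ν(A) < ν(A({i,j})) for every two-element subset {i,j} of α. -/
open Matrix

namespace PsetAux

open Submodule Module

variable {n : ℕ}

lemma nullity_eq_finrank_ker {ι : Type*} [Fintype ι] (A : Matrix ι ι ℝ) :
    A.nullity = finrank ℝ (LinearMap.ker A.mulVecLin) := by
  have h := LinearMap.finrank_range_add_finrank_ker A.mulVecLin
  rw [Module.finrank_fintype_fun_eq_card] at h
  have h2 : A.rank = finrank ℝ (LinearMap.range A.mulVecLin) := rfl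
  unfold Matrix.nullity
  omega

/-- The subspace of vectors vanishing on `α` whose image under `A` vanishes off `α`. -/
def Ksub (A : Matrix (Fin n) (Fin n) ℝ) (α : Finset (Fin n)) : Submodule ℝ (Fin n → ℝ) where
  carrier := {x | (∀ i ∈ α, x i = 0) ∧ ∀ j ∉ α, (A *ᵥ x) j = 0}
  add_mem' := fun {a b} ha hb => ⟨fun i hi => by simp [ha.1 i hi, hb.1 i hi],
    fun j hj => by rw [Matrix.mulVec_add]; simp [ha.2 j hj, hb.2 j hj]⟩
  zero_mem' := ⟨fun i _ => rfl, fun j _ => by rw [Matrix.mulVec_zero]; rfl⟩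
  smul_mem' := fun c x hx => ⟨fun i hi => by simp [hx.1 i hi],
    fun j hj => by rw [Matrix.mulVec_smul]; simp [hx.2 j hj]⟩

lemma mem_Ksub {A : Matrix (Fin n) (Fin n) ℝ} {α : Finset (Fin n)} {x : Fin n → ℝ} :
    x ∈ Ksub A α ↔ (∀ i ∈ α, x i = 0) ∧ ∀ j ∉ α, (A *ᵥ x) j = 0 := Iff.rfl

variable (A : Matrix (Fin n) (Fin n) ℝ) (α : Finset (Fin n))

/-- extension by zero -/
def ext0 (x : ((αᶜ : Finset (Fin n)) : Type) → ℝ) : Fin n → ℝ :=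
  fun j => if h : j ∈ (αᶜ : Finset (Fin n)) then x ⟨j, h⟩ else 0

lemma mulVec_ext0 (x : ((αᶜ : Finset (Fin n)) : Type) → ℝ) (j : Fin n)
    (hj : j ∈ (αᶜ : Finset (Fin n))) :
    (A *ᵥ ext0 α x) j = ((A.subOn αᶜ) *ᵥ x) ⟨j, hj⟩ := by
  unfold ext0 Matrix.subOn
  simp only [Matrix.mulVec, dotProduct, Matrix.submatrix_apply]
  rw [← Finset.sum_subset (Finset.subset_univ (αᶜ : Finset (Fin n)))
    (fun k _ hk => by rw [dif_neg hk, mul_zero])]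
  rw [Finset.univ_eq_attach,
    ← Finset.sum_attach (αᶜ) (fun k => A j k * (if h : k ∈ (αᶜ : Finset (Fin n)) then x ⟨k, h⟩ else 0))]
  exact Finset.sum_congr rfl fun k _ => by rw [dif_pos k.2]


/-- extension by zero as a linear map -/
def ext0Lin : (((αᶜ : Finset (Fin n)) : Type) → ℝ) →ₗ[ℝ] (Fin n → ℝ) where
  toFun := ext0 α
  map_add' x y := by
    funext j
    show ext0 α (x + y) j = ext0 α x j + ext0 α y j
    unfold ext0
    by_cases h : j ∈ (αᶜ : Finset (Fin n))
    · rw [dif_pos h, dif_pos h, dif_pos h]; rfl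
    · rw [dif_neg h, dif_neg h, dif_neg h, add_zero]
  map_smul' c x := by
    funext j
    show ext0 α (c • x) j = c • ext0 α x j
    unfold ext0
    by_cases h : j ∈ (αᶜ : Finset (Fin n))
    · rw [dif_pos h, dif_pos h]; rfl
    · rw [dif_neg h, dif_neg h, smul_zero]

lemma ext0_mem_Ksub (x : ((αᶜ : Finset (Fin n)) : Type) → ℝ)
    (hx : x ∈ LinearMap.ker (A.subOn αᶜ).mulVecLin) : ext0 α x ∈ Ksub A α := by
  constructor
  · intro i hi
    exact dif_neg (by simpa using hi)
  · intro j hj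
    have hj' : j ∈ (αᶜ : Finset (Fin n)) := Finset.mem_compl.2 hj
    rw [mulVec_ext0 A α x j hj']
    rw [LinearMap.mem_ker] at hx
    have : (A.subOn αᶜ) *ᵥ x = 0 := hx
    rw [this]; rfl

lemma nullity_subOn : (A.subOn αᶜ).nullity = finrank ℝ (Ksub A α) := by
  rw [nullity_eq_finrank_ker]
  refine LinearEquiv.finrank_eq (LinearEquiv.ofBijective
    (((ext0Lin α).comp (LinearMap.ker (A.subOn αᶜ).mulVecLin).subtype).codRestrict
      (Ksub A α) (fun x => ext0_mem_Ksub A α x.1 x.2)) ⟨?_, ?_⟩)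
  · intro x y hxy
    have h : ext0 α x.1 = ext0 α y.1 := congrArg Subtype.val hxy
    ext k
    have := congrFun h k.1
    unfold ext0 at this
    rwa [dif_pos k.2, dif_pos k.2] at this
  · rintro ⟨y, hy1, hy2⟩
    set x : ((αᶜ : Finset (Fin n)) : Type) → ℝ := fun k => y k.1 with hxdef
    have hext : ext0 α x = y := by
      funext j
      unfold ext0
      by_cases h : j ∈ (αᶜ : Finset (Fin n))
      · rw [dif_pos h]
      · rw [dif_neg h]
        exact (hy1 j (by simpa using h)).symm
    have hxker : x ∈ LinearMap.ker (A.subOn αᶜ).mulVecLin := by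
      rw [LinearMap.mem_ker]
      show (A.subOn αᶜ) *ᵥ x = 0
      funext j
      rw [← mulVec_ext0 A α x j.1 j.2, hext]
      exact hy2 j.1 (Finset.mem_compl.1 j.2)
    exact ⟨⟨x, hxker⟩, Subtype.ext hext⟩

/-- the restriction of `A` to `Ksub`, mapped to coordinates in `α`. -/
def phi : Ksub A α →ₗ[ℝ] (((α : Finset (Fin n)) : Type) → ℝ) where
  toFun x := fun i => (A *ᵥ x.1) i.1
  map_add' x y := by funext i; simp [Matrix.mulVec_add]
  map_smul' c x := by funext i; simp [Matrix.mulVec_smul]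

lemma ker_phi : LinearMap.ker (phi A α)
    = (LinearMap.ker A.mulVecLin).comap (Ksub A α).subtype := by
  ext x
  simp only [LinearMap.mem_ker, Submodule.mem_comap, Submodule.coe_subtype]
  constructor
  · intro h
    show A *ᵥ x.1 = 0
    funext j
    by_cases hj : j ∈ α
    · exact congrFun h ⟨j, hj⟩
    · exact x.2.2 j hj
  · intro h
    funext i
    show (A *ᵥ x.1) i.1 = 0
    have : A *ᵥ x.1 = 0 := h
    rw [this]; rfl


lemma finrank_ker_phi_eq_inf :
    finrank ℝ (LinearMap.ker (phi A α)) = finrank ℝ ((Ksub A α) ⊓ LinearMap.ker A.mulVecLin : Submodule ℝ (Fin n → ℝ)) := by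
  rw [ker_phi, ← Submodule.map_comap_subtype]
  exact (Submodule.finrank_map_subtype_eq (Ksub A α) _).symm

lemma finrank_range_phi_le : finrank ℝ (LinearMap.range (phi A α)) ≤ α.card := by
  refine (Submodule.finrank_le _).trans_eq ?_
  rw [Module.finrank_fintype_fun_eq_card, Fintype.card_coe]

lemma isPSet_iff_char :
    A.IsPSet α ↔ (∀ x ∈ LinearMap.ker A.mulVecLin, ∀ i ∈ α, x i = 0) ∧
      ∀ i ∈ α, ∃ x : Fin n → ℝ, (∀ k ∈ α, x k = 0) ∧ A *ᵥ x = Pi.single i 1 := by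
  rw [Matrix.IsPSet, nullity_subOn, nullity_eq_finrank_ker]
  have hrn := LinearMap.finrank_range_add_finrank_ker (phi A α)
  constructor
  · intro h
    have hkle : finrank ℝ ((Ksub A α) ⊓ LinearMap.ker A.mulVecLin : Submodule ℝ (Fin n → ℝ))
        ≤ finrank ℝ (LinearMap.ker A.mulVecLin) :=
      Submodule.finrank_mono inf_le_right
    have h1 : finrank ℝ (LinearMap.ker (phi A α)) = finrank ℝ (LinearMap.ker A.mulVecLin) := by
      have := finrank_range_phi_le A α
      rw [finrank_ker_phi_eq_inf] at *
      omega
    have hinf : (Ksub A α) ⊓ LinearMap.ker A.mulVecLin = LinearMap.ker A.mulVecLin := by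
      apply Submodule.eq_of_le_of_finrank_le inf_le_right
      rw [← finrank_ker_phi_eq_inf, h1]
    have hker : LinearMap.ker A.mulVecLin ≤ Ksub A α := inf_eq_right.1 hinf
    have htop : LinearMap.range (phi A α) = ⊤ := by
      apply Submodule.eq_top_of_finrank_eq
      rw [Module.finrank_fintype_fun_eq_card, Fintype.card_coe]
      omega
    constructor
    · intro x hx i hi
      exact (hker hx).1 i hi
    · intro i hi
      have : (Pi.single (⟨i, hi⟩ : ((α : Finset (Fin n)) : Type)) 1) ∈ LinearMap.range (phi A α) := by
        rw [htop]; trivial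
      obtain ⟨x, hx⟩ := this
      refine ⟨x.1, x.2.1, ?_⟩
      funext j
      by_cases hj : j ∈ α
      · have := congrFun hx ⟨j, hj⟩
        show (A *ᵥ x.1) j = _
        rw [show (A *ᵥ x.1) j = phi A α x ⟨j, hj⟩ from rfl, this]
        simp [Pi.single_apply, Subtype.ext_iff]
      · rw [x.2.2 j hj]
        have hne : j ≠ i := fun he => hj (by rw [he]; exact hi)
        simp [hne]
  · rintro ⟨h1, h2⟩
    have hker : LinearMap.ker A.mulVecLin ≤ Ksub A α := by
      intro x hx
      have hx0 : A *ᵥ x = 0 := hx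
      exact ⟨fun i hi => h1 x hx i hi, fun j _ => by rw [hx0]; rfl⟩
    have hkerphi : finrank ℝ (LinearMap.ker (phi A α)) = finrank ℝ (LinearMap.ker A.mulVecLin) := by
      rw [ker_phi]
      exact LinearEquiv.finrank_eq (Submodule.comapSubtypeEquivOfLe hker)
    have htop : LinearMap.range (phi A α) = ⊤ := by
      rw [eq_top_iff, ← (Pi.basisFun ℝ ((α : Finset (Fin n)) : Type)).span_eq]
      refine Submodule.span_le.2 ?_
      rintro _ ⟨i, rfl⟩
      rw [Pi.basisFun_apply]
      obtain ⟨x, hx1, hx2⟩ := h2 i.1 i.2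
      have hxK : x ∈ Ksub A α := by
        refine ⟨hx1, fun j hj => ?_⟩
        rw [hx2]
        have hne : j ≠ i.1 := fun he => hj (by rw [he]; exact i.2)
        simp [hne]
      refine ⟨⟨x, hxK⟩, ?_⟩
      funext k
      show (A *ᵥ x) k.1 = _
      rw [hx2]
      simp only [Pi.single_apply, Subtype.ext_iff]
    rw [htop, finrank_top, Module.finrank_fintype_fun_eq_card, Fintype.card_coe] at hrn
    omega


lemma symm_dot (hA : A.IsSymm) (u v : Fin n → ℝ) :
    u ⬝ᵥ (A *ᵥ v) = (A *ᵥ u) ⬝ᵥ v := by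
  rw [Matrix.dotProduct_mulVec, ← Matrix.vecMul_transpose, hA.eq]

/-- The key lemma: if `i ≠ k` are P-vertex-like indices with witnesses `xi, xk`, the kernel
vanishes at `i` and `k`, and deleting `{i,k}` strictly increases the nullity, then `xi k = 0`. -/
lemma key (hA : A.IsSymm) (i k : Fin n) (hik : i ≠ k) (xi xk : Fin n → ℝ)
    (hxiA : A *ᵥ xi = Pi.single i 1) (hxkA : A *ᵥ xk = Pi.single k 1)
    (hxi : xi i = 0) (hxk : xk k = 0)
    (hlt : A.nullity < (A.subOn ({i, k} : Finset (Fin n))ᶜ).nullity)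
    (hker : ∀ x ∈ LinearMap.ker A.mulVecLin, x i = 0 ∧ x k = 0) :
    xi k = 0 := by
  set β : Finset (Fin n) := {i, k} with hβ
  rw [nullity_subOn A β, nullity_eq_finrank_ker] at hlt
  have hkle : LinearMap.ker A.mulVecLin ≤ Ksub A β := by
    intro x hx
    have hx0 : A *ᵥ x = 0 := hx
    refine ⟨fun m hm => ?_, fun j _ => by rw [hx0]; rfl⟩
    rcases Finset.mem_insert.1 hm with rfl | hm
    · exact (hker x hx).1
    · rw [Finset.mem_singleton.1 hm]
      exact (hker x hx).2
  have hkerphi : finrank ℝ (LinearMap.ker (phi A β)) = finrank ℝ (LinearMap.ker A.mulVecLin) := by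
    rw [ker_phi]
    exact LinearEquiv.finrank_eq (Submodule.comapSubtypeEquivOfLe hkle)
  have hrn := LinearMap.finrank_range_add_finrank_ker (phi A β)
  have hne : LinearMap.range (phi A β) ≠ ⊥ := by
    intro hbot
    rw [hbot, finrank_bot] at hrn
    omega
  obtain ⟨y, ⟨z, hzy⟩, hy0⟩ := Submodule.exists_mem_ne_zero_of_ne_bot hne
  have hzi : z.1 i = 0 := z.2.1 i (Finset.mem_insert_self i {k})
  have hzk : z.1 k = 0 := z.2.1 k (by rw [hβ]; exact Finset.mem_insert_of_mem (Finset.mem_singleton_self k))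
  have hsupp : ∀ w : Fin n → ℝ, w ⬝ᵥ (A *ᵥ z.1) = w i * (A *ᵥ z.1) i + w k * (A *ᵥ z.1) k := by
    intro w
    rw [dotProduct]
    rw [← Finset.sum_subset (Finset.subset_univ β)
      (fun m _ hm => by rw [z.2.2 m hm, mul_zero])]
    exact Finset.sum_pair hik
  have hzero : ∀ w : Fin n → ℝ, (A *ᵥ w = Pi.single i 1 ∨ A *ᵥ w = Pi.single k 1) →
      w i * (A *ᵥ z.1) i + w k * (A *ᵥ z.1) k = 0 := by
    intro w hw
    rw [← hsupp, symm_dot A hA]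
    rcases hw with hw | hw <;> rw [hw, single_dotProduct, one_mul]
    · exact hzi
    · exact hzk
  have e1 : xi i * (A *ᵥ z.1) i + xi k * (A *ᵥ z.1) k = 0 := hzero xi (Or.inl hxiA)
  have e2 : xk i * (A *ᵥ z.1) i + xk k * (A *ᵥ z.1) k = 0 := hzero xk (Or.inr hxkA)
  rw [hxi, zero_mul, zero_add] at e1
  rw [hxk, zero_mul, add_zero] at e2
  have hsym : xi k = xk i := by
    have h1 : xk ⬝ᵥ (A *ᵥ xi) = (A *ᵥ xk) ⬝ᵥ xi := symm_dot A hA xk xi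
    rw [hxiA, hxkA, dotProduct_single, single_dotProduct, mul_one, one_mul] at h1
    exact h1.symm
  have hab : (A *ᵥ z.1) i ≠ 0 ∨ (A *ᵥ z.1) k ≠ 0 := by
    by_contra hco
    push_neg at hco
    apply hy0
    rw [← hzy]
    funext m
    show (A *ᵥ z.1) m.1 = 0
    rcases Finset.mem_insert.1 m.2 with hm | hm
    · rw [hm]; exact hco.1
    · rw [Finset.mem_singleton.1 hm]; exact hco.2
  rcases hab with ha | hb
  · rw [hsym]
    exact (mul_eq_zero.1 e2).resolve_right ha
  · exact (mul_eq_zero.1 e1).resolve_right hb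

end PsetAux

open PsetAux in
/-- If `α` is a set of P-vertices of the symmetric matrix `A` with `|α| ≥ 2`,
then `α` is a P-set of `A` iff `ν(A) < ν(A({i, j}))` for every two-element
subset `{i, j}` of `α`. -/
theorem pset_iff_nullity_lt {n : ℕ} (A : Matrix (Fin n) (Fin n) ℝ) (hA : A.IsSymm)
    (α : Finset (Fin n)) (hα : 2 ≤ α.card) (hPvert : ∀ i ∈ α, A.IsPSet {i}) :
    A.IsPSet α ↔ ∀ i ∈ α, ∀ j ∈ α, i ≠ j →
      A.nullity < (A.subOn ({i, j} : Finset (Fin n))ᶜ).nullity := by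

  have hmem : ∀ (i j k : Fin n), k ∈ ({i, j} : Finset (Fin n)) → k = i ∨ k = j := by
    intro i j k hk
    rcases Finset.mem_insert.1 hk with h | h
    · exact Or.inl h
    · exact Or.inr (Finset.mem_singleton.1 h)
  have hsing : ∀ i ∈ α, (∀ x ∈ LinearMap.ker A.mulVecLin, x i = 0) ∧
      ∃ x, x i = 0 ∧ A *ᵥ x = Pi.single i 1 := by
    intro i hi
    have h := (isPSet_iff_char A {i}).1 (hPvert i hi)
    refine ⟨fun x hx => h.1 x hx i (Finset.mem_singleton_self i), ?_⟩
    obtain ⟨x, hx1, hx2⟩ := h.2 i (Finset.mem_singleton_self i)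
    exact ⟨x, hx1 i (Finset.mem_singleton_self i), hx2⟩
  constructor
  · intro hP i hi j hj hij
    rw [isPSet_iff_char] at hP
    obtain ⟨h1, h2⟩ := hP
    have hmemα : ∀ k ∈ ({i, j} : Finset (Fin n)), k ∈ α := by
      intro k hk
      rcases hmem i j k hk with rfl | rfl
      · exact hi
      · exact hj
    have hpair : A.IsPSet {i, j} := by
      rw [isPSet_iff_char]
      refine ⟨fun x hx k hk => h1 x hx k (hmemα k hk), fun k hk => ?_⟩
      obtain ⟨x, hx1, hx2⟩ := h2 k (hmemα k hk)
      exact ⟨x, fun m hm => hx1 m (hmemα m hm), hx2⟩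
    rw [Matrix.IsPSet, Finset.card_pair hij] at hpair
    omega
  · intro h
    rw [isPSet_iff_char]
    refine ⟨fun x hx i hi => (hsing i hi).1 x hx, fun i hi => ?_⟩
    obtain ⟨xi, hxi0, hxiA⟩ := (hsing i hi).2
    refine ⟨xi, fun k hk => ?_, hxiA⟩
    by_cases hki : k = i
    · rw [hki]; exact hxi0
    obtain ⟨xk, hxk0, hxkA⟩ := (hsing k hk).2
    refine key A hA i k (fun he => hki he.symm) xi xk hxiA hxkA hxi0 hxk0
      (h i hi k hk (fun he => hki he.symm)) ?_
    exact fun x hx => ⟨(hsing i hi).1 x hx, (hsing k hk).1 x hx⟩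
end

section
/- Let N be an m×m real symmetric matrix and let α be a set of indices with 2|α| > m such that the principal submatrix N[α] is the zero matrix. Then det(N) = 0. -/
open Matrix

/-- If `N` is an `m × m` symmetric matrix, `2|α| > m`, and the principal
submatrix `N[α]` is the zero matrix, then `det N = 0`. -/
theorem det_eq_zero_of_zero_principal_submatrix {m : ℕ}
    (N : Matrix (Fin m) (Fin m) ℝ) (hN : N.IsSymm) (α : Finset (Fin m))
    (hcard : m < 2 * α.card) (h0 : N.subOn α = 0) :
    N.det = 0 := by
  rw [← Matrix.exists_mulVec_eq_zero_iff]
  -- the columns of N indexed by α, restricted to rows outside α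
  set f : α → ((αᶜ : Finset (Fin m)) → ℝ) := fun j i => N i j with hf
  have hαle : α.card ≤ m := by simpa using α.card_le_univ
  have hnotli : ¬ LinearIndependent ℝ f := by
    intro h
    have := h.fintype_card_le_finrank
    simp only [Module.finrank_pi, Fintype.card_coe, Finset.card_compl,
      Fintype.card_fin] at this
    omega
  obtain ⟨g, hsum, j0, hgj0⟩ := Fintype.not_linearIndependent_iff.mp hnotli
  refine ⟨fun j => if h : j ∈ α then g ⟨j, h⟩ else 0, ?_, ?_⟩
  · intro hc
    apply hgj0
    have := congrFun hc j0.1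
    simpa [j0.2] using this
  · funext i
    have key : ∀ j, N i j * (if h : j ∈ α then g ⟨j, h⟩ else 0)
        = if h : j ∈ α then N i j * g ⟨j, h⟩ else 0 := by
      intro j; split <;> simp
    have hsum' : (N *ᵥ fun j => if h : j ∈ α then g ⟨j, h⟩ else 0) i
        = ∑ j : α, N i j * g j := by
      simp only [Matrix.mulVec, dotProduct, key]
      rw [← Finset.sum_subset α.subset_univ (fun x _ hx => by simp [hx]),
        ← Finset.sum_attach α (fun j => if h : j ∈ α then N i j * g ⟨j, h⟩ else 0)]
      exact Finset.sum_congr rfl (fun j _ => by simp [j.2])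
    rw [hsum']
    by_cases hi : i ∈ α
    · have : ∀ j : α, N i j = 0 := fun j =>
        congrFun (congrFun h0 ⟨i, hi⟩) j
      simp [this]
    · have := congrFun hsum ⟨i, by simpa using hi⟩
      simpa [f, mul_comm] using this
end

section
/- Let A be an n×n real symmetric matrix and let α be a set of indices such that the rows of A indexed by α are linearly independent. Then there exists a set β of indices with α ⊆ β, |β| = rank(A), and A[β] nonsingular; moreover, for any such β the rows of A indexed by β form a basis of the row space of A. -/
open Matrix

/-- Key lemma: if the rows indexed by `β` of the symmetric matrix `A` are
independent and span the row space, then the principal submatrix is invertible. -/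
lemma key_isUnit {n : ℕ} (A : Matrix (Fin n) (Fin n) ℝ) (hA : A.IsSymm)
    (β : Finset (Fin n))
    (h1 : LinearIndependent ℝ (fun i : β => A i))
    (h2 : Submodule.span ℝ (A '' ↑β) = Submodule.span ℝ (Set.range A)) :
    IsUnit (A.subOn β).det := by
  classical
  set r : (Fin n → ℝ) →ₗ[ℝ] (β → ℝ) := LinearMap.funLeft ℝ ℝ Subtype.val with hr
  set M : Matrix β β ℝ := A.subOn β with hM
  set B : Matrix β (Fin n) ℝ := A.submatrix Subtype.val id with hB
  have hBrows : LinearIndependent ℝ B := h1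
  have hrankB : B.rank = Fintype.card β := hBrows.rank_matrix
  have hMT : Mᵀ = fun j : β => r (A j.1) := by
    funext j i
    simp only [Matrix.transpose_apply, hM, Matrix.subOn, Matrix.submatrix_apply, hr,
      LinearMap.funLeft_apply]
    exact congrFun (congrFun hA j.1) i.1
  have hBT : Bᵀ = fun j : Fin n => r (A j) := by
    funext j i
    simp only [Matrix.transpose_apply, hB, Matrix.submatrix_apply, hr,
      LinearMap.funLeft_apply, id]
    exact congrFun (congrFun hA j) i.1
  have hrangeMT : Set.range Mᵀ = r '' (A '' ↑β) := by
    rw [hMT]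
    ext v
    constructor
    · rintro ⟨j, rfl⟩
      exact ⟨A j.1, ⟨j.1, j.2, rfl⟩, rfl⟩
    · rintro ⟨_, ⟨i, hi, rfl⟩, rfl⟩
      exact ⟨⟨i, hi⟩, rfl⟩
  have hrangeBT : Set.range Bᵀ = r '' (Set.range A) := by
    rw [hBT]
    ext v
    constructor
    · rintro ⟨j, rfl⟩
      exact ⟨A j, ⟨j, rfl⟩, rfl⟩
    · rintro ⟨_, ⟨j, rfl⟩, rfl⟩
      exact ⟨j, rfl⟩
  have hrankM : M.rank = Fintype.card β := by
    rw [Matrix.rank_eq_finrank_span_cols, show M.col = Mᵀ from rfl, hrangeMT, Submodule.span_image, h2,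
      ← Submodule.span_image, ← hrangeBT, show Bᵀ = B.col from rfl,
      ← Matrix.rank_eq_finrank_span_cols, hrankB]
  have hrowsM : LinearIndependent ℝ (fun i => M i) := by
    rw [linearIndependent_iff_card_eq_finrank_span]
    rw [Matrix.rank_eq_finrank_span_row] at hrankM
    exact hrankM.symm
  rw [← Matrix.isUnit_iff_isUnit_det]
  exact Matrix.linearIndependent_rows_iff_isUnit.mp hrowsM

/-- Key lemma 2: if the principal submatrix on `β` is invertible and `|β| = rank A`,
then the rows indexed by `β` form a basis of the row space. -/
lemma key_basis {n : ℕ} (A : Matrix (Fin n) (Fin n) ℝ) (β : Finset (Fin n))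
    (hcard : β.card = A.rank) (hdet : IsUnit (A.subOn β).det) :
    LinearIndependent ℝ (fun i : β => A i) ∧
      Submodule.span ℝ (A '' ↑β) = Submodule.span ℝ (Set.range A) := by
  classical
  set r : (Fin n → ℝ) →ₗ[ℝ] (β → ℝ) := LinearMap.funLeft ℝ ℝ Subtype.val with hr
  have hU : IsUnit (A.subOn β) := (Matrix.isUnit_iff_isUnit_det _).mpr hdet
  have hrows : LinearIndependent ℝ (fun i => (A.subOn β) i) :=
    Matrix.linearIndependent_rows_iff_isUnit.mpr hU
  have h1 : LinearIndependent ℝ (fun i : β => A i) := by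
    apply LinearIndependent.of_comp r
    exact hrows
  refine ⟨h1, ?_⟩
  have hle : Submodule.span ℝ (A '' ↑β) ≤ Submodule.span ℝ (Set.range A) :=
    Submodule.span_mono (Set.image_subset_range _ _)
  have him : A '' ↑β = Set.range (fun i : β => A i) := Set.image_eq_range _ _
  have hfr : Fintype.card β = (Set.range fun i : β => A i).finrank ℝ :=
    linearIndependent_iff_card_eq_finrank_span.mp h1
  apply Submodule.eq_of_le_of_finrank_eq hle
  rw [him]
  rw [Set.finrank] at hfr
  rw [← hfr, Fintype.card_coe, hcard, Matrix.rank_eq_finrank_span_row, show A.row = A from rfl]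

/-- If the rows of the symmetric matrix `A` indexed by `α` are linearly
independent, then there is a set `β ⊇ α` with `|β| = rank A` and `A[β]`
nonsingular; moreover, for any such `β` the rows of `A` indexed by `β` form a
basis of the row space of `A`. -/
theorem exists_nonsingular_principal_extension {n : ℕ}
    (A : Matrix (Fin n) (Fin n) ℝ) (hA : A.IsSymm) (α : Finset (Fin n))
    (hind : LinearIndependent ℝ (fun i : α => A i)) :
    (∃ β : Finset (Fin n), α ⊆ β ∧ β.card = A.rank ∧ IsUnit (A.subOn β).det) ∧
      ∀ β : Finset (Fin n), α ⊆ β → β.card = A.rank → IsUnit (A.subOn β).det →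
        LinearIndependent ℝ (fun i : β => A i) ∧
          Submodule.span ℝ (A '' ↑β) = Submodule.span ℝ (Set.range A) := by
  classical
  refine ⟨?_, fun β _ hc hd => key_basis A β hc hd⟩
  -- extend the independent rows to a maximal independent subset of the rows
  have himg : LinearIndependent ℝ ((↑) : (A '' ↑α) → (Fin n → ℝ)) := LinearIndepOn.id_image (hind : LinearIndepOn ℝ A ↑α)
  obtain ⟨b, hbt, hsb, htb, hli⟩ :=
    exists_linearIndepOn_id_extension himg (Set.image_subset_range A ↑α)
  have hbfin : b.Finite := (Set.finite_range A).subset hbt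
  set bb : Finset (Fin n → ℝ) := hbfin.toFinset with hbb
  have hmem : ∀ v : bb, (v : Fin n → ℝ) ∈ b := fun v => hbfin.mem_toFinset.mp v.2
  have hchoice : ∀ v : bb, ∃ i : Fin n, A i = v ∧ ((v : Fin n → ℝ) ∈ A '' ↑α → i ∈ α) := by
    intro v
    by_cases hvα : (v : Fin n → ℝ) ∈ A '' ↑α
    · obtain ⟨i, hiα, hAi⟩ := hvα
      exact ⟨i, hAi, fun _ => hiα⟩
    · obtain ⟨i, hAi⟩ := hbt (hmem v)
      exact ⟨i, hAi, fun h => absurd h hvα⟩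
  choose g hg1 hg2 using hchoice
  set β : Finset (Fin n) := Finset.univ.image g with hβ
  have hmemβ : ∀ i, i ∈ β ↔ ∃ v : bb, g v = i := by
    intro i
    simp [hβ]
  -- A '' β = b
  have himgβ : A '' ↑β = b := by
    ext v
    constructor
    · rintro ⟨i, hiβ, rfl⟩
      obtain ⟨w, rfl⟩ := (hmemβ i).mp hiβ
      rw [hg1 w]
      exact hmem w
    · intro hv
      exact ⟨g ⟨v, hbfin.mem_toFinset.mpr hv⟩, (hmemβ _).mpr ⟨⟨v, hbfin.mem_toFinset.mpr hv⟩, rfl⟩,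
        hg1 _⟩
  -- α ⊆ β
  have hαβ : α ⊆ β := by
    intro i hiα
    have hvb : A i ∈ b := hsb ⟨i, hiα, rfl⟩
    set v : bb := ⟨A i, hbfin.mem_toFinset.mpr hvb⟩ with hv
    have hgvα : g v ∈ α := hg2 v ⟨i, hiα, rfl⟩
    have : A (g v) = A i := hg1 v
    have heq : (⟨g v, hgvα⟩ : α) = ⟨i, hiα⟩ := hind.injective (by simpa using this)
    have : g v = i := congrArg Subtype.val heq
    rw [← this]
    exact (hmemβ _).mpr ⟨v, rfl⟩
  -- injectivity of A on β
  have hAinjβ : ∀ i ∈ β, ∀ j ∈ β, A i = A j → i = j := by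
    intro i hi j hj hij
    obtain ⟨v, rfl⟩ := (hmemβ i).mp hi
    obtain ⟨w, rfl⟩ := (hmemβ j).mp hj
    have hv : (v : Fin n → ℝ) = w := by rw [← hg1 v, ← hg1 w, hij]
    rw [Subtype.ext hv]
  -- rows over β are independent
  have hβind : LinearIndependent ℝ (fun i : β => A i) := by
    let e : {x // x ∈ β} → {x // x ∈ b} :=
      fun i => ⟨A i.1, by rw [← himgβ]; exact ⟨i.1, i.2, rfl⟩⟩
    have einj : Function.Injective e := by
      intro i j hij
      have : A (i : Fin n) = A (j : Fin n) := congrArg Subtype.val hij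
      exact Subtype.ext (hAinjβ i.1 i.2 j.1 j.2 this)
    exact hli.comp e einj
  -- span condition
  have hspan : Submodule.span ℝ (A '' ↑β) = Submodule.span ℝ (Set.range A) := by
    rw [himgβ]
    refine le_antisymm (Submodule.span_mono hbt) (Submodule.span_le.mpr htb)
  -- cardinality
  have hcard : β.card = A.rank := by
    have hfr : Fintype.card β = (Set.range fun i : β => A i).finrank ℝ :=
      linearIndependent_iff_card_eq_finrank_span.mp hβind
    rw [Set.finrank] at hfr
    rw [← Fintype.card_coe, hfr,
      show (Set.range fun i : β => A i) = A '' ↑β from (Set.image_eq_range _ _).symm, hspan,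
      Matrix.rank_eq_finrank_span_row, show A.row = A from rfl]
  exact ⟨β, hαβ, hcard, key_isUnit A hA β hβind hspan⟩
end

section
/- Let A be an n×n real symmetric matrix, let γ be a set of indices which is a P-set of A, and let β be a set of indices with γ ⊆ β, |β| = rank(A), and A[β] nonsingular. Then γ is a P-set of A[β]. -/
open Matrix

section Aux
open Module
set_option linter.unusedSectionVars false

set_option synthInstance.maxHeartbeats 1000000
set_option maxHeartbeats 1000000

variable {ι κ ρ : Type*} [Fintype ι] [Fintype κ] [Fintype ρ]

lemma mulVecLin_submatrix_row (M : Matrix ι ρ ℝ) (f : κ → ι) :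
    (M.submatrix f id).mulVecLin = (LinearMap.funLeft ℝ ℝ f).comp M.mulVecLin := by
  ext v i
  rfl

lemma rank_submatrix_row_le (M : Matrix ι ρ ℝ) (f : κ → ι) :
    (M.submatrix f id).rank ≤ M.rank := by
  rw [Matrix.rank, Matrix.rank, mulVecLin_submatrix_row, LinearMap.range_comp]
  exact Submodule.finrank_map_le _ _

lemma rank_submatrix_col_le (M : Matrix ρ ι ℝ) (f : κ → ι) :
    (M.submatrix id f).rank ≤ M.rank := by
  have h := rank_submatrix_row_le Mᵀ f
  rwa [← Matrix.transpose_submatrix, Matrix.rank_transpose, Matrix.rank_transpose] at h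

lemma rank_submatrix_sq_le (M : Matrix ι ι ℝ) (f : κ → ι) :
    (M.submatrix f f).rank ≤ M.rank := by
  have h1 : M.submatrix f f = (M.submatrix id f).submatrix f id := by
    simp [Matrix.submatrix_submatrix]
  rw [h1]
  exact (rank_submatrix_row_le _ f).trans (rank_submatrix_col_le M f)

lemma rank_le_rank_submatrix_row (M : Matrix ι ρ ℝ) (f : κ → ι) (hf : Function.Injective f) :
    M.rank ≤ (M.submatrix f id).rank + (Fintype.card ι - Fintype.card κ) := by
  set π := LinearMap.funLeft ℝ ℝ f with hπdef
  have hπ : Function.Surjective π := LinearMap.funLeft_surjective_of_injective ℝ ℝ f hf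
  have hker : finrank ℝ (LinearMap.ker π) = Fintype.card ι - Fintype.card κ := by
    have h1 := π.finrank_range_add_finrank_ker
    rw [LinearMap.range_eq_top.mpr hπ, finrank_top] at h1
    simp only [finrank_pi] at h1
    omega
  set p := LinearMap.range M.mulVecLin with hp
  set g := π.comp p.subtype with hg
  have h2 := g.finrank_range_add_finrank_ker
  have hrange : LinearMap.range g = Submodule.map π p := by
    rw [hg, LinearMap.range_comp, Submodule.range_subtype]
  have hkerg : finrank ℝ (LinearMap.ker g) ≤ Fintype.card ι - Fintype.card κ := by
    rw [← hker]
    have h3 : LinearMap.ker g = Submodule.comap p.subtype (LinearMap.ker π ⊓ p) := by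
      rw [hg, LinearMap.ker_comp, Submodule.comap_inf, Submodule.comap_subtype_self, inf_top_eq]
    rw [h3]
    rw [LinearEquiv.finrank_eq (Submodule.comapSubtypeEquivOfLe (inf_le_right :
      LinearMap.ker π ⊓ p ≤ p))]
    exact Submodule.finrank_mono inf_le_left
  have hrank2 : (M.submatrix f id).rank = finrank ℝ (Submodule.map π p) := by
    rw [Matrix.rank, mulVecLin_submatrix_row, LinearMap.range_comp]
  have hrank1 : M.rank = finrank ℝ p := rfl
  rw [hrange] at h2
  rw [hrank1, hrank2]
  have hfp : finrank ℝ p = finrank ℝ ↥(Submodule.map π p) + finrank ℝ (LinearMap.ker g) := by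
    rw [← h2]
  omega

lemma rank_le_rank_submatrix_col (M : Matrix ρ ι ℝ) (f : κ → ι) (hf : Function.Injective f) :
    M.rank ≤ (M.submatrix id f).rank + (Fintype.card ι - Fintype.card κ) := by
  have h := rank_le_rank_submatrix_row Mᵀ f hf
  rwa [← Matrix.transpose_submatrix, Matrix.rank_transpose, Matrix.rank_transpose] at h

lemma rank_le_rank_submatrix_sq (M : Matrix ι ι ℝ) (f : κ → ι) (hf : Function.Injective f) :
    M.rank ≤ (M.submatrix f f).rank + 2 * (Fintype.card ι - Fintype.card κ) := by
  have h1 := rank_le_rank_submatrix_col M f hf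
  have h2 := rank_le_rank_submatrix_row (M.submatrix id f) f hf
  have h3 : (M.submatrix id f).submatrix f id = M.submatrix f f := by
    simp [Matrix.submatrix_submatrix]
  rw [h3] at h2
  omega

end Aux

/-- If `γ` is a P-set of the symmetric matrix `A` and `β ⊇ γ` satisfies
`|β| = rank A` with `A[β]` nonsingular, then `γ` is a P-set of `A[β]`. -/
theorem pset_of_nonsingular_principal_submatrix {n : ℕ}
    (A : Matrix (Fin n) (Fin n) ℝ) (hA : A.IsSymm) (γ β : Finset (Fin n))
    (hγβ : γ ⊆ β) (hP : A.IsPSet γ) (hcard : β.card = A.rank)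
    (hns : IsUnit (A.subOn β).det) :
    (A.subOn β).IsPSet (γ.subtype (· ∈ β)) := by
  classical
  set γ' := γ.subtype (· ∈ β) with hγ'
  have hγ'card : γ'.card = γ.card := by
    rw [hγ', Finset.card_subtype, Finset.filter_true_of_mem (fun x hx => hγβ hx)]
  have hkβ : γ.card ≤ β.card := Finset.card_le_card hγβ
  have hrn : A.rank ≤ n := by simpa using A.rank_le_card_width
  have hrB : (A.subOn β).rank = β.card := by
    rw [Matrix.rank_of_isUnit _ ((Matrix.isUnit_iff_isUnit_det _).mpr hns), Fintype.card_coe]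
  have hcardc : Fintype.card ↥(γᶜ : Finset (Fin n)) = n - γ.card := by
    rw [Fintype.card_coe, Finset.card_compl, Fintype.card_fin]
  have hr1le : (A.subOn γᶜ).rank ≤ n - γ.card := by
    have h := (A.subOn γᶜ).rank_le_card_width
    rwa [hcardc] at h
  have hPe : (n - γ.card) - (A.subOn γᶜ).rank = (n - A.rank) + γ.card := by
    have h := hP
    unfold Matrix.IsPSet Matrix.nullity at h
    rwa [hcardc, Fintype.card_fin] at h
  have hmem : ∀ x : {x : ↥β // x ∈ γ'ᶜ}, (x : ↥β).val ∈ (γᶜ : Finset (Fin n)) := by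
    intro x
    have hx := x.2
    rw [Finset.mem_compl] at hx ⊢
    intro hmem'
    exact hx (Finset.mem_subtype.mpr hmem')
  have hginj : Function.Injective
      (fun x : {x : ↥β // x ∈ γ'ᶜ} => (⟨(x : ↥β).val, hmem x⟩ : ↥(γᶜ : Finset (Fin n)))) := by
    intro x y hxy
    simp only [Subtype.mk.injEq] at hxy
    exact Subtype.ext (Subtype.ext hxy)
  have heq : (A.subOn β).subOn γ'ᶜ = (A.subOn γᶜ).submatrix
      (fun x : {x : ↥β // x ∈ γ'ᶜ} => (⟨(x : ↥β).val, hmem x⟩ : ↥(γᶜ : Finset (Fin n))))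
      (fun x : {x : ↥β // x ∈ γ'ᶜ} => (⟨(x : ↥β).val, hmem x⟩ : ↥(γᶜ : Finset (Fin n)))) := rfl
  have hupper : ((A.subOn β).subOn γ'ᶜ).rank ≤ (A.subOn γᶜ).rank := by
    rw [heq]; exact rank_submatrix_sq_le _ _
  have hcidx : Fintype.card {x : ↥β // x ∈ γ'ᶜ} = β.card - γ.card := by
    rw [Fintype.card_coe, Finset.card_compl, Fintype.card_coe, hγ'card]
  have hlower := rank_le_rank_submatrix_sq (A.subOn β)
    (Subtype.val : {x : ↥β // x ∈ γ'ᶜ} → ↥β) Subtype.val_injective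
  have hlower' : (A.subOn β).rank ≤ ((A.subOn β).subOn γ'ᶜ).rank
      + 2 * (β.card - (β.card - γ.card)) := by
    rw [show (A.subOn β).subOn γ'ᶜ
      = (A.subOn β).submatrix Subtype.val Subtype.val from rfl]
    rw [Fintype.card_coe, hcidx] at hlower
    exact hlower
  have hr2le : ((A.subOn β).subOn γ'ᶜ).rank ≤ β.card - γ.card := by
    have h := ((A.subOn β).subOn γ'ᶜ).rank_le_card_width
    rwa [hcidx] at h
  unfold Matrix.IsPSet Matrix.nullity
  rw [hcidx, Fintype.card_coe, hrB, hγ'card]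
  omega
end
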